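/- arXiv:1409.6685 — 7 statements merged into one kernel-verified Lean document; each statement's English description precedes it below -/
import Mathlib

section
/- Let d ≥ 3, let v₁,…,v_l ∈ ℝⁿ be orthonormal vectors, λ₁,…,λ_l ∈ ℝ nonzero, and let f(x) = Σ_{i=1}^l λᵢ (vᵢ·x)^d ∈ ℂ[x₁,…,xₙ]. Let y₁,…,y_l ∈ ℂ, not all zero, and suppose there is c ∈ ℂ such that λᵢ yᵢ^{d−2} = c for every i with yᵢ ≠ 0. Then the vector w = Σ_{i=1}^l yᵢ vᵢ ∈ ℂⁿ satisfies ∇f(w) = d·c·w; in particular w is an eigenvector of the corresponding tensor T with eigenvalue c. -/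
open Finset MvPolynomial

/-- For an odeco polynomial `f(x) = ∑ᵢ λᵢ (vᵢ·x)^d` with `v₁,…,v_l`
orthonormal and `λᵢ ≠ 0`, if `y ∈ ℂ^l` is not all zero and there is `c ∈ ℂ` with
`λᵢ yᵢ^{d-2} = c` whenever `yᵢ ≠ 0`, then `w = ∑ᵢ yᵢ vᵢ` satisfies `∇f(w) = d·c·w`,
so `w` is an eigenvector with eigenvalue `c`. -/
theorem odeco_eigenvector_formula
    (n l d : ℕ) (hd : 3 ≤ d)
    (v : Fin l → Fin n → ℝ)
    (horth : ∀ i j : Fin l, (∑ s : Fin n, v i s * v j s) = if i = j then 1 else 0)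
    (lam : Fin l → ℝ) (hlam : ∀ i, lam i ≠ 0)
    (f : MvPolynomial (Fin n) ℂ)
    (hf : f = ∑ i : Fin l, C ((lam i : ℂ)) * (∑ s : Fin n, C ((v i s : ℂ)) * X s) ^ d)
    (y : Fin l → ℂ) (hy : y ≠ 0)
    (c : ℂ) (hc : ∀ i : Fin l, y i ≠ 0 → (lam i : ℂ) * y i ^ (d - 2) = c)
    (w : Fin n → ℂ) (hw : w = fun s => ∑ i : Fin l, y i * (v i s : ℂ)) :
    ∀ j : Fin n, eval w (pderiv j f) = (d : ℂ) * c * w j := by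
  intro j
  subst hf
  have hL : ∀ i : Fin l,
      eval w (∑ s : Fin n, C ((v i s : ℂ)) * X s) = y i := by
    intro i
    rw [hw]
    simp only [eval_sum, eval_mul, eval_C, eval_X, Finset.mul_sum]
    rw [Finset.sum_comm]
    have : ∀ k : Fin l, (∑ s : Fin n, (v i s : ℂ) * (y k * (v k s : ℂ)))
        = y k * (if i = k then 1 else 0) := by
      intro k
      have h2 : (∑ s : Fin n, (v i s : ℂ) * (v k s : ℂ)) = if i = k then 1 else 0 := by
        calc (∑ s : Fin n, (v i s : ℂ) * (v k s : ℂ))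
            = ((∑ s : Fin n, v i s * v k s : ℝ) : ℂ) := by push_cast; rfl
          _ = if i = k then 1 else 0 := by rw [horth i k]; split <;> simp
      calc (∑ s : Fin n, (v i s : ℂ) * (y k * (v k s : ℂ)))
          = y k * ∑ s : Fin n, (v i s : ℂ) * (v k s : ℂ) := by
            rw [Finset.mul_sum]; apply Finset.sum_congr rfl; intro s _; ring
        _ = y k * (if i = k then 1 else 0) := by rw [h2]
    rw [Finset.sum_congr rfl (fun k _ => this k)]
    simp
  have hpd : ∀ i : Fin l, pderiv j ((∑ s : Fin n, C ((v i s : ℂ)) * X s) ^ d)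
      = (d : MvPolynomial (Fin n) ℂ) * (∑ s : Fin n, C ((v i s : ℂ)) * X s) ^ (d - 1)
        * C ((v i j : ℂ)) := by
    intro i
    rw [pderiv_pow]
    congr 1
    rw [map_sum]
    simp [pderiv_X, Pi.single_apply, Finset.sum_ite_eq, eq_comm]
  simp only [map_sum, pderiv_mul, pderiv_C, zero_mul, zero_add, eval_sum, eval_mul, eval_C]
  rw [Finset.sum_congr rfl (fun i _ => by rw [hpd i])]
  simp only [eval_mul, eval_pow, map_natCast, eval_C, hL]
  have key : ∀ i : Fin l, (lam i : ℂ) * ((d : ℂ) * y i ^ (d - 1) * (v i j : ℂ))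
      = (d : ℂ) * c * (y i * (v i j : ℂ)) := by
    intro i
    by_cases hyi : y i = 0
    · rw [hyi, zero_pow (by omega)]; ring
    · have := hc i hyi
      have hpow : y i ^ (d - 1) = y i ^ (d - 2) * y i := by
        rw [← pow_succ]; congr 1; omega
      rw [hpow]
      calc (lam i : ℂ) * ((d : ℂ) * (y i ^ (d - 2) * y i) * (v i j : ℂ))
          = (d : ℂ) * ((lam i : ℂ) * y i ^ (d - 2)) * (y i * (v i j : ℂ)) := by ring
        _ = (d : ℂ) * c * (y i * (v i j : ℂ)) := by rw [this]
  rw [Finset.sum_congr rfl (fun i _ => key i), ← Finset.mul_sum, hw]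
end

section
/- Let d ≥ 3, 1 ≤ l ≤ n, let v₁,…,v_l ∈ ℝⁿ be orthonormal vectors, λ₁,…,λ_l ∈ ℝ nonzero, and let f(x) = Σ_{i=1}^l λᵢ (vᵢ·x)^d ∈ ℂ[x₁,…,xₙ]. A nonzero vector w ∈ ℂⁿ is an eigenvector of the corresponding tensor T (i.e. ∇f(w) is parallel to w) if and only if either (a) vᵢ·w = 0 for all i = 1,…,l, or (b) w = Σ_{i=1}^l (vᵢ·w) vᵢ and there exists c ∈ ℂ such that λᵢ (vᵢ·w)^{d−2} = c for every i with vᵢ·w ≠ 0. -/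
open Finset MvPolynomial

/-- characterization of all eigenvectors of an odeco tensor
`f(x) = ∑_{i=1}^l λᵢ (vᵢ·x)^d` with `v₁,…,v_l ∈ ℝⁿ` orthonormal and `λᵢ ≠ 0`:
a nonzero `w ∈ ℂⁿ` is an eigenvector (`∇f(w)` parallel to `w`) iff either
(a) `vᵢ·w = 0` for all `i`, or (b) `w = ∑ᵢ (vᵢ·w) vᵢ` and there is `c ∈ ℂ` with
`λᵢ (vᵢ·w)^{d-2} = c` for all `i` with `vᵢ·w ≠ 0`. -/
theorem odeco_eigenvector_characterization
    (n l d : ℕ) (hd : 3 ≤ d) (hl : 1 ≤ l) (hln : l ≤ n)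
    (v : Fin l → Fin n → ℝ)
    (horth : ∀ i j : Fin l, (∑ s : Fin n, v i s * v j s) = if i = j then 1 else 0)
    (lam : Fin l → ℝ) (hlam : ∀ i, lam i ≠ 0)
    (f : MvPolynomial (Fin n) ℂ)
    (hf : f = ∑ i : Fin l, C ((lam i : ℂ)) * (∑ s : Fin n, C ((v i s : ℂ)) * X s) ^ d)
    (w : Fin n → ℂ) (hw : w ≠ 0) :
    (∀ i j : Fin n, eval w (pderiv i f) * w j = eval w (pderiv j f) * w i) ↔
      ((∀ i : Fin l, (∑ s : Fin n, (v i s : ℂ) * w s) = 0) ∨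
        ((w = fun s => ∑ i : Fin l, (∑ t : Fin n, (v i t : ℂ) * w t) * (v i s : ℂ)) ∧
          ∃ c : ℂ, ∀ i : Fin l, (∑ t : Fin n, (v i t : ℂ) * w t) ≠ 0 →
            (lam i : ℂ) * (∑ t : Fin n, (v i t : ℂ) * w t) ^ (d - 2) = c)) := by
  set a : Fin l → ℂ := fun i => ∑ t : Fin n, (v i t : ℂ) * w t with hadef
  have ha : ∀ i, (∑ t : Fin n, (v i t : ℂ) * w t) = a i := fun i => rfl
  simp only [ha]
  have hd1 : d - 1 ≠ 0 := by omega
  have hdd : d - 1 = (d - 2) + 1 := by omega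
  have horthC : ∀ i j : Fin l,
      (∑ s : Fin n, (v i s : ℂ) * (v j s : ℂ)) = if i = j then 1 else 0 := by
    intro i j
    have h2 : (∑ s : Fin n, (v i s : ℂ) * (v j s : ℂ))
        = ((∑ s : Fin n, v i s * v j s : ℝ) : ℂ) := by push_cast; rfl
    rw [h2, horth i j]
    split <;> simp
  -- gradient formula
  have hgrad : ∀ j : Fin n, eval w (pderiv j f) =
      ∑ i : Fin l, (d : ℂ) * (lam i : ℂ) * a i ^ (d - 1) * (v i j : ℂ) := by
    intro j
    subst hf
    rw [map_sum, map_sum]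
    apply Finset.sum_congr rfl
    intro i _
    have hp : pderiv j (∑ s : Fin n, C ((v i s : ℂ)) * X s) = C ((v i j : ℂ)) := by
      rw [map_sum, Finset.sum_eq_single j]
      · simp
      · intro s _ hs
        rw [pderiv_C_mul, pderiv_X_of_ne hs, mul_zero]
      · simp
    have he : eval w (∑ s : Fin n, C ((v i s : ℂ)) * X s) = a i := by
      simp [hadef]
    rw [pderiv_C_mul, pderiv_pow, hp]
    rw [eval_mul, eval_C, eval_mul, eval_mul, eval_pow, he, eval_C]
    simp only [map_natCast]
    ring
  constructor
  · -- forward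
    intro H
    obtain ⟨k, hk⟩ := Function.ne_iff.mp hw
    set μ : ℂ := eval w (pderiv k f) / w k with hμdef
    have hμ : ∀ j, eval w (pderiv j f) = μ * w j := by
      intro j
      rw [hμdef, div_mul_eq_mul_div, eq_div_iff hk]
      linear_combination H j k
    have hkey : ∀ m : Fin l, (d : ℂ) * (lam m : ℂ) * a m ^ (d - 1) = μ * a m := by
      intro m
      have h1 : ∑ j : Fin n, (v m j : ℂ) * eval w (pderiv j f)
          = ∑ j : Fin n, (v m j : ℂ) * (μ * w j) :=
        Finset.sum_congr rfl fun j _ => by rw [hμ j]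
      have h2 : ∑ j : Fin n, (v m j : ℂ) * eval w (pderiv j f)
          = (d : ℂ) * (lam m : ℂ) * a m ^ (d - 1) := by
        calc ∑ j : Fin n, (v m j : ℂ) * eval w (pderiv j f)
            = ∑ j : Fin n, ∑ i : Fin l,
                ((d : ℂ) * (lam i : ℂ) * a i ^ (d - 1)) * ((v m j : ℂ) * (v i j : ℂ)) := by
              apply Finset.sum_congr rfl; intro j _
              rw [hgrad j, Finset.mul_sum]
              apply Finset.sum_congr rfl; intro i _; ring
          _ = ∑ i : Fin l, ((d : ℂ) * (lam i : ℂ) * a i ^ (d - 1)) *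
                (∑ j : Fin n, (v m j : ℂ) * (v i j : ℂ)) := by
              rw [Finset.sum_comm]
              exact Finset.sum_congr rfl fun i _ => (Finset.mul_sum _ _ _).symm
          _ = (d : ℂ) * (lam m : ℂ) * a m ^ (d - 1) := by
              simp only [horthC, mul_ite, mul_one, mul_zero]
              rw [Finset.sum_ite_eq Finset.univ m]
              simp
      have h3 : ∑ j : Fin n, (v m j : ℂ) * (μ * w j) = μ * a m := by
        rw [hadef, Finset.mul_sum]
        apply Finset.sum_congr rfl; intro j _; ring
      rw [h2, h3] at h1
      exact h1
    by_cases hA : ∀ i : Fin l, a i = 0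
    · exact Or.inl hA
    · push_neg at hA
      obtain ⟨m₀, hm₀⟩ := hA
      have hdC : (d : ℂ) ≠ 0 := by exact_mod_cast (by omega : d ≠ 0)
      have hμ0 : μ ≠ 0 := by
        intro h0
        have := hkey m₀
        rw [h0, zero_mul] at this
        exact (mul_ne_zero (mul_ne_zero hdC (by exact_mod_cast hlam m₀))
          (pow_ne_zero _ hm₀)) this
      refine Or.inr ⟨?_, ⟨μ / d, ?_⟩⟩
      · funext s
        have hs : μ * w s = μ * ∑ i : Fin l, a i * (v i s : ℂ) := by
          calc μ * w s = eval w (pderiv s f) := (hμ s).symm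
            _ = ∑ i : Fin l, (d : ℂ) * (lam i : ℂ) * a i ^ (d - 1) * (v i s : ℂ) := hgrad s
            _ = ∑ i : Fin l, μ * (a i * (v i s : ℂ)) := by
                apply Finset.sum_congr rfl; intro i _
                linear_combination (v i s : ℂ) * hkey i
            _ = μ * ∑ i : Fin l, a i * (v i s : ℂ) := (Finset.mul_sum _ _ _).symm
        exact mul_left_cancel₀ hμ0 hs
      · intro i hi
        have hpow : a i ^ (d - 1) = a i ^ (d - 2) * a i := by rw [hdd, pow_succ]
        have hk' := hkey i
        rw [hpow] at hk'
        have h4 : (d : ℂ) * (lam i : ℂ) * a i ^ (d - 2) = μ := by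
          apply mul_right_cancel₀ hi
          linear_combination hk'
        field_simp
        linear_combination h4
  · -- backward
    rintro (hA | ⟨hw', c, hc⟩) <;> intro i j
    · have hz : ∀ jj : Fin n, eval w (pderiv jj f) = 0 := by
        intro jj
        rw [hgrad]
        apply Finset.sum_eq_zero
        intro m _
        rw [hA m, zero_pow hd1, mul_zero, zero_mul]
      rw [hz, hz, zero_mul, zero_mul]
    · have hterm : ∀ m : Fin l,
          (d : ℂ) * (lam m : ℂ) * a m ^ (d - 1) = (d : ℂ) * c * a m := by
        intro m
        by_cases hm : a m = 0
        · rw [hm, zero_pow hd1, mul_zero, mul_zero]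
        · have hpow : a m ^ (d - 1) = a m ^ (d - 2) * a m := by rw [hdd, pow_succ]
          rw [hpow]
          linear_combination (d : ℂ) * a m * hc m hm
      have hg : ∀ jj : Fin n, eval w (pderiv jj f) = (d : ℂ) * c * w jj := by
        intro jj
        rw [hgrad]
        have : ∀ m ∈ Finset.univ, (d : ℂ) * (lam m : ℂ) * a m ^ (d - 1) * (v m jj : ℂ)
            = ((d : ℂ) * c) * (a m * (v m jj : ℂ)) := fun m _ => by
          linear_combination (v m jj : ℂ) * hterm m
        rw [Finset.sum_congr rfl this, ← Finset.mul_sum]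
        rw [congrFun hw' jj]
      rw [hg, hg]
      ring
end

section
/- Let d ≥ 3, let v₁,…,vₙ ∈ ℝⁿ be an orthonormal basis, λ₁,…,λₙ ∈ ℝ all nonzero, and let f(x) = Σ_{i=1}^n λᵢ (vᵢ·x)^d ∈ ℂ[x₁,…,xₙ]. Then the set of complex lines { ℂ·w : w ∈ ℂⁿ, w ≠ 0, ∇f(w) is parallel to w } is finite, of cardinality exactly ((d−1)ⁿ − 1)/(d−2). That is, the odeco tensor T = Σᵢ λᵢ vᵢ^{⊗d} has exactly ((d−1)ⁿ − 1)/(d−2) eigenvectors in ℂⁿ up to scaling. -/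
open Finset MvPolynomial Matrix

lemma roots_finset (k : ℕ) (hk : k ≠ 0) (c : ℂ) (hc : c ≠ 0) :
    ∃ s : Finset ℂ, (∀ z, z ∈ s ↔ z ^ k = c) ∧ s.card = k ∧ (0 : ℂ) ∉ s := by
  have hζ := Complex.isPrimitiveRoot_exp k hk
  obtain ⟨α, hα⟩ := IsAlgClosed.exists_pow_nat_eq c (Nat.pos_of_ne_zero hk)
  have hα0 : α ≠ 0 := by rintro rfl; exact hc (by simpa [zero_pow hk] using hα.symm)
  refine ⟨(Finset.range k).image (fun m => Complex.exp (2 * Real.pi * Complex.I / k) ^ m * α),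
    ?_, ?_, ?_⟩
  · intro z
    simp only [Finset.mem_image, Finset.mem_range]
    constructor
    · rintro ⟨m, hm, rfl⟩
      rw [mul_pow, ← pow_mul, mul_comm m k, pow_mul, hζ.pow_eq_one, one_pow, one_mul, hα]
    · intro hz
      haveI : NeZero k := ⟨hk⟩
      have h1 : (z / α) ^ k = 1 := by rw [div_pow, hα, hz, div_self hc]
      obtain ⟨m, hm, hmz⟩ := hζ.eq_pow_of_pow_eq_one h1
      exact ⟨m, hm, by rw [hmz, div_mul_cancel₀ _ hα0]⟩
  · rw [Finset.card_image_of_injOn (by simpa using hζ.injOn_pow_mul hα0), Finset.card_range]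
  · simp only [Finset.mem_image, Finset.mem_range, not_exists]
    rintro m ⟨hm, h0⟩
    exact hα0 (by simpa [Complex.exp_ne_zero] using h0)

lemma par_mulVec {n : ℕ} (M : Matrix (Fin n) (Fin n) ℂ) (a b : Fin n → ℂ)
    (h : ∀ i j, a i * b j = a j * b i) (i j : Fin n) :
    M.mulVec a i * M.mulVec b j = M.mulVec a j * M.mulVec b i := by
  simp only [Matrix.mulVec, dotProduct]
  rw [Finset.sum_mul_sum, Finset.sum_mul_sum, Finset.sum_comm]
  refine Finset.sum_congr rfl fun s _ => Finset.sum_congr rfl fun t _ => ?_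
  linear_combination (M i t * M j s) * h t s

lemma eval_grad (n d : ℕ) (V : Fin n → Fin n → ℂ) (lamC : Fin n → ℂ)
    (w : Fin n → ℂ) (j : Fin n) :
    eval w (pderiv j (∑ i : Fin n, C (lamC i) * (∑ s : Fin n, C (V i s) * X s) ^ d))
      = ∑ i : Fin n, lamC i * ((d : ℂ) * (∑ s : Fin n, V i s * w s) ^ (d - 1) * V i j) := by
  rw [map_sum, map_sum]
  refine Finset.sum_congr rfl fun i _ => ?_
  have hL : pderiv j (∑ s : Fin n, C (V i s) * X s) = C (V i j) := by
    rw [map_sum]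
    simp [pderiv_C_mul, Pi.single_apply, mul_ite, Finset.sum_ite_eq']
  rw [pderiv_C_mul, pderiv_pow, hL]
  simp [eval_sum, mul_assoc]

/-- a generic odeco tensor `T = ∑ᵢ λᵢ vᵢ^{⊗d}` (orthonormal basis
`v₁,…,vₙ` of `ℝⁿ`, all `λᵢ ≠ 0`) has exactly `((d-1)^n - 1)/(d-2)` eigenvectors
in `ℂⁿ` up to scaling, i.e. the set of eigenvector lines is finite of that
cardinality. -/
theorem odeco_number_of_eigenvectors
    (n d : ℕ) (hd : 3 ≤ d)
    (v : Fin n → Fin n → ℝ)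
    (horth : ∀ i j : Fin n, (∑ s : Fin n, v i s * v j s) = if i = j then 1 else 0)
    (lam : Fin n → ℝ) (hlam : ∀ i, lam i ≠ 0)
    (f : MvPolynomial (Fin n) ℂ)
    (hf : f = ∑ i : Fin n, C ((lam i : ℂ)) * (∑ s : Fin n, C ((v i s : ℂ)) * X s) ^ d)
    (E : Set (Submodule ℂ (Fin n → ℂ)))
    (hE : E = {L | ∃ w : Fin n → ℂ, w ≠ 0 ∧
        (∀ i j : Fin n, eval w (pderiv i f) * w j = eval w (pderiv j f) * w i) ∧
        L = Submodule.span ℂ {w}}) :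
    E.Finite ∧ E.ncard = ((d - 1) ^ n - 1) / (d - 2) := by
  classical
  set lamC : Fin n → ℂ := fun i => (lam i : ℂ) with hlamCdef
  have hlamC : ∀ i, lamC i ≠ 0 := fun i => Complex.ofReal_ne_zero.mpr (hlam i)
  set M : Matrix (Fin n) (Fin n) ℂ := Matrix.of (fun i s => ((v i s : ℝ) : ℂ)) with hMdef
  have hMMt : M * Mᵀ = 1 := by
    ext i j
    simp only [Matrix.mul_apply, Matrix.transpose_apply, hMdef, Matrix.of_apply,
      Matrix.one_apply]
    have hcast : (∑ s, ((v i s : ℝ) : ℂ) * ((v j s : ℝ) : ℂ))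
        = ((∑ s, v i s * v j s : ℝ) : ℂ) := by
      rw [Complex.ofReal_sum]
      exact Finset.sum_congr rfl fun s _ => (Complex.ofReal_mul _ _).symm
    rw [hcast, horth i j]
    split_ifs <;> simp
  have hMtM : Mᵀ * M = 1 := mul_eq_one_comm.mp hMMt
  set e : (Fin n → ℂ) ≃ₗ[ℂ] (Fin n → ℂ) := Matrix.toLin'OfInv hMtM hMMt with hedef
  have he : ∀ w, e w = M.mulVec w := fun w => Matrix.toLin'_apply _ _
  have hesymm : ∀ y, e.symm y = Mᵀ.mulVec y := fun y => Matrix.toLin'_apply _ _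
  set k := d - 2 with hkdef
  have hk : k ≠ 0 := by omega
  have hd1 : d - 1 = k + 1 := by omega
  have hdC : (d : ℂ) ≠ 0 := Nat.cast_ne_zero.mpr (by omega)
  set Q : (Fin n → ℂ) → Prop := fun y =>
    ∀ i j, lamC i * y i ^ (d - 1) * y j = lamC j * y j ^ (d - 1) * y i with hQdef
  -- Step 1: the eigenvector condition transforms under the orthogonal change of variables
  have hPQ : ∀ w : Fin n → ℂ,
      (∀ i j, eval w (pderiv i f) * w j = eval w (pderiv j f) * w i) ↔ Q (M.mulVec w) := by
    intro w
    set y := M.mulVec w with hy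
    set h : Fin n → ℂ := fun i => lamC i * y i ^ (d - 1) with hh
    have hyi : ∀ i, y i = ∑ s, ((v i s : ℝ) : ℂ) * w s := by
      intro i; simp [hy, Matrix.mulVec, dotProduct, hMdef]
    have hgrad : ∀ j, eval w (pderiv j f) = (d : ℂ) * Mᵀ.mulVec h j := by
      intro j
      rw [hf, eval_grad n d (fun i s => ((v i s : ℝ) : ℂ)) lamC w j]
      simp only [Matrix.mulVec, dotProduct, Matrix.transpose_apply, hh, hMdef,
        Matrix.of_apply, Finset.mul_sum]
      refine Finset.sum_congr rfl fun i _ => ?_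
      rw [← hyi i]
      ring
    have hw : w = Mᵀ.mulVec y := by
      rw [hy, Matrix.mulVec_mulVec, hMtM, Matrix.one_mulVec]
    have hMh : M.mulVec (Mᵀ.mulVec h) = h := by
      rw [Matrix.mulVec_mulVec, hMMt, Matrix.one_mulVec]
    have hMy : M.mulVec (Mᵀ.mulVec y) = y := by
      rw [Matrix.mulVec_mulVec, hMMt, Matrix.one_mulVec]
    constructor
    · intro hP i j
      have key : ∀ i j, Mᵀ.mulVec h i * Mᵀ.mulVec y j = Mᵀ.mulVec h j * Mᵀ.mulVec y i := by
        intro i j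
        have h1 := hP i j
        rw [hgrad i, hgrad j, hw] at h1
        exact mul_left_cancel₀ hdC (by linear_combination h1)
      have h2 := par_mulVec M (Mᵀ.mulVec h) (Mᵀ.mulVec y) key i j
      rw [hMh, hMy] at h2
      simpa [hh, mul_assoc] using h2
    · intro hQy i j
      have key : ∀ i j, h i * y j = h j * y i := by
        intro i j
        have := hQy i j
        simpa [hh, mul_assoc] using this
      have h2 := par_mulVec Mᵀ h y key i j
      rw [hgrad i, hgrad j, hw]
      linear_combination (d : ℂ) * h2
  -- Step 2: transport E along the linear equivalence
  set E' : Set (Submodule ℂ (Fin n → ℂ)) :=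
    {L | ∃ y : Fin n → ℂ, y ≠ 0 ∧ Q y ∧ L = Submodule.span ℂ {y}} with hE'def
  have hmapspan : ∀ w : Fin n → ℂ,
      Submodule.map (e : (Fin n → ℂ) →ₗ[ℂ] (Fin n → ℂ)) (Submodule.span ℂ {w})
        = Submodule.span ℂ {e w} := by
    intro w
    rw [Submodule.map_span, Set.image_singleton]
    rfl
  have himg : (Submodule.map (e : (Fin n → ℂ) →ₗ[ℂ] (Fin n → ℂ))) '' E = E' := by
    ext L
    constructor
    · rintro ⟨L₀, hL₀, rfl⟩
      rw [hE] at hL₀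
      obtain ⟨w, hw0, hPw, rfl⟩ := hL₀
      refine ⟨e w, ?_, ?_, hmapspan w⟩
      · simpa using (map_ne_zero_iff _ e.injective).mpr hw0
      · rw [he w]; exact (hPQ w).mp hPw
    · rintro ⟨y, hy0, hQy, rfl⟩
      refine ⟨Submodule.span ℂ {e.symm y}, ?_, ?_⟩
      · rw [hE]
        refine ⟨e.symm y, ?_, ?_, rfl⟩
        · simpa using (map_ne_zero_iff _ e.symm.injective).mpr hy0
        · apply (hPQ _).mpr
          have : M.mulVec (e.symm y) = y := by
            rw [hesymm, Matrix.mulVec_mulVec, hMMt, Matrix.one_mulVec]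
          rw [this]; exact hQy
      · rw [hmapspan, LinearEquiv.apply_symm_apply]
  have hinj : Function.Injective (Submodule.map (e : (Fin n → ℂ) →ₗ[ℂ] (Fin n → ℂ))) :=
    Submodule.map_injective_of_injective e.injective
  -- Step 3: count E' via the normalized solution set
  obtain ⟨u, hu_mem, hu_card, -⟩ := roots_finset k hk 1 one_ne_zero
  have hroots := fun i => roots_finset k hk (lamC i)⁻¹ (inv_ne_zero (hlamC i))
  choose r hr_mem hr_card hr_zero using hroots
  set 𝒜 : Finset (Fin n → ℂ) := Fintype.piFinset (fun i => insert (0 : ℂ) (r i)) with h𝒜def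
  have h𝒜mem : ∀ y : Fin n → ℂ, y ∈ 𝒜 ↔ ∀ i, y i = 0 ∨ (y i) ^ k = (lamC i)⁻¹ := by
    intro y
    rw [Fintype.mem_piFinset]
    exact forall_congr' fun i => by rw [Finset.mem_insert, hr_mem i]
  have h𝒜card : 𝒜.card = (k + 1) ^ n := by
    rw [h𝒜def, Fintype.card_piFinset]
    have : ∀ i, (insert (0 : ℂ) (r i)).card = k + 1 := fun i => by
      rw [Finset.card_insert_of_notMem (hr_zero i), hr_card i]
    simp only [this]
    simp [Finset.prod_const]
  have h0mem : (0 : Fin n → ℂ) ∈ 𝒜 := (h𝒜mem 0).mpr fun i => Or.inl rfl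
  set 𝒜' : Finset (Fin n → ℂ) := 𝒜.erase 0 with h𝒜'def
  have h𝒜'card : 𝒜'.card = (k + 1) ^ n - 1 := by
    rw [h𝒜'def, Finset.card_erase_of_mem h0mem, h𝒜card]
  set φ : (Fin n → ℂ) → Submodule ℂ (Fin n → ℂ) := fun y => Submodule.span ℂ {y} with hφdef
  -- every element of 𝒜' gives an eigenline
  have h𝒜'Q : ∀ y ∈ 𝒜', Q y := by
    intro y hy'
    have hy := (h𝒜mem y).mp (Finset.mem_of_mem_erase hy')
    intro i j
    rcases hy i with hi0 | hi
    · rcases hy j with hj0 | hj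
      · rw [hi0, hj0]; ring
      · rw [hi0, zero_pow (by omega : d - 1 ≠ 0)]; ring
    · rcases hy j with hj0 | hj
      · rw [hj0, zero_pow (by omega : d - 1 ≠ 0)]; ring
      · have hi0 : y i ≠ 0 := by
          intro h0; rw [h0, zero_pow hk] at hi; exact inv_ne_zero (hlamC i) hi.symm
        have hj0 : y j ≠ 0 := by
          intro h0; rw [h0, zero_pow hk] at hj; exact inv_ne_zero (hlamC j) hj.symm
        have e1 : lamC i * y i ^ (d - 1) = y i := by
          rw [hd1, pow_succ, hi, ← mul_assoc, mul_inv_cancel₀ (hlamC i), one_mul]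
        have e2 : lamC j * y j ^ (d - 1) = y j := by
          rw [hd1, pow_succ, hj, ← mul_assoc, mul_inv_cancel₀ (hlamC j), one_mul]
        rw [e1, e2, mul_comm]
  -- E' is exactly the image of 𝒜' under φ
  have hE'img : E' = ↑(𝒜'.image φ) := by
    ext L
    simp only [Finset.coe_image, Set.mem_image, Finset.mem_coe]
    constructor
    · rintro ⟨y, hy0, hQy, rfl⟩
      obtain ⟨i₁, hi₁⟩ : ∃ i, y i ≠ 0 := Function.ne_iff.mp hy0
      set c : ℂ := lamC i₁ * y i₁ ^ k with hcdef
      have hc0 : c ≠ 0 := mul_ne_zero (hlamC i₁) (pow_ne_zero _ hi₁)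
      have hconst : ∀ i, y i ≠ 0 → lamC i * y i ^ k = c := by
        intro i hi
        have hq := hQy i i₁
        rw [hd1] at hq
        have hcc : (lamC i * y i ^ k) * (y i * y i₁) = (lamC i₁ * y i₁ ^ k) * (y i * y i₁) := by
          rw [pow_succ, pow_succ] at hq
          linear_combination hq
        exact mul_right_cancel₀ (mul_ne_zero hi hi₁) hcc
      obtain ⟨t, ht⟩ := IsAlgClosed.exists_pow_nat_eq c⁻¹ (Nat.pos_of_ne_zero hk)
      have ht0 : t ≠ 0 := by
        intro h0; rw [h0, zero_pow hk] at ht; exact inv_ne_zero hc0 ht.symm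
      refine ⟨t • y, ?_, ?_⟩
      · rw [h𝒜'def, Finset.mem_erase]
        constructor
        · intro h0
          apply hi₁
          have := congrFun h0 i₁
          simp only [Pi.smul_apply, smul_eq_mul, Pi.zero_apply] at this
          exact (mul_eq_zero.mp this).resolve_left ht0
        · rw [h𝒜mem]
          intro i
          rcases eq_or_ne (y i) 0 with hi0 | hi0
          · left; simp [hi0]
          · right
            have hc := hconst i hi0
            have hyik : y i ^ k ≠ 0 := pow_ne_zero _ hi0
            simp only [Pi.smul_apply, smul_eq_mul, mul_pow, ht]
            rw [← hc, mul_inv, mul_assoc, inv_mul_cancel₀ hyik, mul_one]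
      · show Submodule.span ℂ {t • y} = Submodule.span ℂ {y}
        exact Submodule.span_singleton_smul_eq (IsUnit.mk0 t ht0) y
    · rintro ⟨y, hy', rfl⟩
      have hy0 : y ≠ 0 := Finset.ne_of_mem_erase hy'
      exact ⟨y, hy0, h𝒜'Q y hy', rfl⟩
  -- fibers of φ on 𝒜' have exactly k elements
  have hfiber : ∀ y ∈ 𝒜', (𝒜'.filter (fun z => φ z = φ y)).card = k := by
    intro y hy'
    have hy0 : y ≠ 0 := Finset.ne_of_mem_erase hy'
    have hymem := (h𝒜mem y).mp (Finset.mem_of_mem_erase hy')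
    obtain ⟨i₁, hi₁⟩ : ∃ i, y i ≠ 0 := Function.ne_iff.mp hy0
    have hyk : y i₁ ^ k = (lamC i₁)⁻¹ := (hymem i₁).resolve_left hi₁
    have hset : 𝒜'.filter (fun z => φ z = φ y) = u.image (fun t => t • y) := by
      ext z
      rw [Finset.mem_filter, Finset.mem_image]
      constructor
      · rintro ⟨hz', hspan⟩
        have hz0 : z ≠ 0 := Finset.ne_of_mem_erase hz'
        have hzmem := (h𝒜mem z).mp (Finset.mem_of_mem_erase hz')
        have hspan' : Submodule.span ℂ {z} = Submodule.span ℂ {y} := hspan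
        have hzy : z ∈ Submodule.span ℂ {y} := by
          rw [← hspan']; exact Submodule.mem_span_singleton_self z
        obtain ⟨t, rfl⟩ := Submodule.mem_span_singleton.mp hzy
        have ht0 : t ≠ 0 := by rintro rfl; simp at hz0
        have hti : (t • y) i₁ ≠ 0 := by
          simp only [Pi.smul_apply, smul_eq_mul]; exact mul_ne_zero ht0 hi₁
        have hzk : ((t • y) i₁) ^ k = (lamC i₁)⁻¹ := (hzmem i₁).resolve_left hti
        have htk : t ^ k = 1 := by
          have hmm : t ^ k * y i₁ ^ k = y i₁ ^ k := by
            rw [← mul_pow]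
            simp only [Pi.smul_apply, smul_eq_mul] at hzk
            rw [hzk, hyk]
          exact mul_right_cancel₀ (pow_ne_zero _ hi₁) (by rw [hmm, one_mul])
        exact ⟨t, (hu_mem t).mpr htk, rfl⟩
      · rintro ⟨t, htu, rfl⟩
        have htk : t ^ k = 1 := (hu_mem t).mp htu
        have ht0 : t ≠ 0 := by rintro rfl; rw [zero_pow hk] at htk; exact zero_ne_one htk
        refine ⟨?_, ?_⟩
        · rw [h𝒜'def, Finset.mem_erase]
          constructor
          · intro h0
            apply hi₁
            have := congrFun h0 i₁
            simp only [Pi.smul_apply, smul_eq_mul, Pi.zero_apply] at this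
            exact (mul_eq_zero.mp this).resolve_left ht0
          · rw [h𝒜mem]
            intro i
            rcases hymem i with hi0 | hik
            · left; simp [hi0]
            · right
              simp only [Pi.smul_apply, smul_eq_mul, mul_pow, htk, one_mul, hik]
        · show Submodule.span ℂ {t • y} = Submodule.span ℂ {y}
          exact Submodule.span_singleton_smul_eq (IsUnit.mk0 t ht0) y
    rw [hset, Finset.card_image_of_injOn, hu_card]
    intro t _ t' _ hmul
    have := congrFun hmul i₁
    simp only [Pi.smul_apply, smul_eq_mul] at this
    exact mul_right_cancel₀ hi₁ this
  -- put the counting together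
  have hcount : 𝒜'.card = (𝒜'.image φ).card * k := by
    rw [Finset.card_eq_sum_card_image φ 𝒜']
    apply Finset.sum_const_nat
    intro L hL
    obtain ⟨y, hy', rfl⟩ := Finset.mem_image.mp hL
    exact hfiber y hy'
  have hE'fin : E'.Finite := by rw [hE'img]; exact (𝒜'.image φ).finite_toSet
  have hEfin : E.Finite := by
    have himgfin : (Submodule.map (e : (Fin n → ℂ) →ₗ[ℂ] (Fin n → ℂ)) '' E).Finite := by
      rw [himg]; exact hE'fin
    exact Set.Finite.of_finite_image himgfin hinj.injOn
  constructor
  · exact hEfin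
  · have h1 : E.ncard = E'.ncard := by
      rw [← himg, Set.ncard_image_of_injective E hinj]
    have h2 : E'.ncard = (𝒜'.image φ).card := by
      rw [hE'img, Set.ncard_coe_finset]
    have h3 : ((d - 1) ^ n - 1) = (𝒜'.image φ).card * k := by
      rw [← hcount, h𝒜'card, hd1]
    rw [h1, h2, h3, hkdef, Nat.mul_div_cancel _ (by omega : 0 < d - 2)]
end

section
/- Let d ≥ 3, 1 ≤ l ≤ n, let v₁,…,v_l ∈ ℝⁿ be orthonormal vectors, λ₁,…,λ_l ∈ ℝ nonzero, and let f(x) = Σ_{i=1}^l λᵢ (vᵢ·x)^d ∈ ℂ[x₁,…,xₙ]. For every nonempty subset S ⊆ {1,…,l}, the set of complex lines ℂ·w spanned by eigenvectors w of the corresponding tensor T with w = Σ_{i=1}^l (vᵢ·w)vᵢ and { i : vᵢ·w ≠ 0 } = S has exactly (d−2)^{|S|−1} elements. Consequently the total number of eigenvector lines contained in the complex span of v₁,…,v_l is ((d−1)^l − 1)/(d−2). -/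
/-!
Write a vector of the span as `w = ∑ cᵢ vᵢ`. Orthonormality gives `∇f(w) = ∑ d λᵢ cᵢ^{d-1} vᵢ`
and `cᵢ = vᵢ·w`, so `w` is an eigenvector of `f` exactly when `c` is an eigenvector of the
diagonal form `∑ λᵢ xᵢ^d`, i.e. `d λᵢ cᵢ^{d-1} = μ cᵢ` for all `i`. On the support `S` of `c` this
says that `λᵢ cᵢ^{d-2}` is constant. Every line with support `S` contains exactly one vector with
`c_{i₀} = 1` for a fixed `i₀ ∈ S`, and its other coordinates `cᵢ`, `i ∈ S`, are free choices among
the `d - 2` roots of `x^{d-2} = λ_{i₀}/λᵢ`. Lines with different supports are different, and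
`∑_{S ≠ ∅} (d-2)^{|S|-1} = ((d-1)^l - 1)/(d-2)`.
-/

open Finset MvPolynomial Matrix

section Lines

variable {K V W : Type*} [Field K] [AddCommGroup V] [Module K V] [AddCommGroup W] [Module K W]

theorem span_singleton_map_eq_iff {F : W →ₗ[K] V} (hF : Function.Injective F) {c c' : W} :
    K ∙ F c = K ∙ F c' ↔ ∃ z : Kˣ, z • c = c' := by
  simp only [Submodule.span_singleton_eq_span_singleton, Units.smul_def, ← map_smul, hF.eq_iff]

theorem ncard_image_span_singleton_eq_ncard_normalized {F : W →ₗ[K] V}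
    (hF : Function.Injective F) (φ : W →ₗ[K] K) {Q : Set W} (hφ : ∀ c ∈ Q, φ c ≠ 0)
    (hQ : ∀ c ∈ Q, ∀ t : K, t ≠ 0 → t • c ∈ Q) :
    ((fun c => K ∙ F c) '' Q).ncard = {c ∈ Q | φ c = 1}.ncard := by
  have himage : (fun c => K ∙ F c) '' Q = (fun c => K ∙ F c) '' {c ∈ Q | φ c = 1} := by
    refine (Set.image_mono (Set.sep_subset _ _)).antisymm' ?_
    rintro _ ⟨c, hc, rfl⟩
    have hc0 := hφ c hc
    refine ⟨(φ c)⁻¹ • c, ⟨hQ c hc _ (inv_ne_zero hc0), by simp [hc0]⟩, ?_⟩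
    simp only [map_smul, Submodule.span_singleton_smul_eq (inv_ne_zero hc0).isUnit]
  rw [himage, Set.InjOn.ncard_image]
  rintro c ⟨-, hc⟩ c' ⟨-, hc'⟩ h
  obtain ⟨z, rfl⟩ := (span_singleton_map_eq_iff hF).1 h
  rw [Units.smul_def, map_smul, hc, smul_eq_mul, mul_one] at hc'
  rw [Units.smul_def, hc', one_smul]

end Lines

theorem exists_eq_smul_iff_forall_mul_eq_mul {K σ : Type*} [Field K] {g w : σ → K} (hw : w ≠ 0) :
    (∃ μ : K, g = μ • w) ↔ ∀ s t, g s * w t = g t * w s := by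
  refine ⟨fun ⟨μ, hμ⟩ s t => by simp only [hμ, Pi.smul_apply, smul_eq_mul]; ring, fun h => ?_⟩
  obtain ⟨t, ht⟩ := Function.ne_iff.1 hw
  refine ⟨g t / w t, funext fun s => ?_⟩
  rw [Pi.smul_apply, smul_eq_mul, div_mul_eq_mul_div, eq_div_iff ht]
  exact h s t

section Diagonal

variable {K ι : Type*} [Field K]

/-- `c` is an eigenvector of the diagonal form `∑ aᵢ xᵢ ^ d`. -/
def IsDiagonalEigenvector (a : ι → K) (d : ℕ) (c : ι → K) : Prop :=
  c ≠ 0 ∧ ∃ μ : K, ∀ i, d * a i * c i ^ (d - 1) = μ * c i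

theorem IsDiagonalEigenvector.smul {a : ι → K} {d : ℕ} {c : ι → K}
    (h : IsDiagonalEigenvector a d c) {t : K} (ht : t ≠ 0) :
    IsDiagonalEigenvector a d (t • c) := by
  obtain ⟨hc, μ, hμ⟩ := h
  refine ⟨smul_ne_zero ht hc, t ^ (d - 1) * μ / t, fun i => ?_⟩
  have hcancel : t ^ (d - 1) * μ / t * (t * c i) = t ^ (d - 1) * (μ * c i) := by field_simp
  simp only [Pi.smul_apply, smul_eq_mul, hcancel, ← hμ i]
  ring

end Diagonal

theorem eval_pderiv_sum_C_mul_pow {R ι σ : Type*} [CommRing R] [Fintype ι] [Fintype σ]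
    (a : ι → R) (U : Matrix ι σ R) (d : ℕ) (w : σ → R) (s : σ) :
    eval w (pderiv s (∑ i, C (a i) * (∑ t, C (U i t) * X t) ^ d)) =
      ((fun i => d * a i * (U *ᵥ w) i ^ (d - 1)) ᵥ* U) s := by
  classical
  simp only [map_sum, Derivation.leibniz, Derivation.leibniz_pow, pderiv_X, Pi.single_apply,
    smul_eq_mul, mul_ite, mul_one, mul_zero, derivation_C, add_zero, sum_ite_eq', mem_univ,
    ↓reduceIte, nsmul_eq_mul, map_mul, eval_C, map_natCast, map_pow, eval_X, vecMul, dotProduct,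
    mulVec]
  exact sum_congr rfl fun _ _ => by ring

section Orthonormal

variable {R ι σ : Type*} [CommSemiring R] [Fintype ι] [DecidableEq ι] [Fintype σ]

theorem mulVec_vecMul_of_mul_transpose_eq_one {U : Matrix ι σ R} (hU : U * Uᵀ = 1)
    (c : ι → R) : U *ᵥ (c ᵥ* U) = c := by
  rw [mulVec_vecMul, hU, one_mulVec]

theorem vecMulLinear_injective_of_mul_transpose_eq_one {U : Matrix ι σ R} (hU : U * Uᵀ = 1) :
    Function.Injective U.vecMulLinear :=
  Function.LeftInverse.injective (mulVec_vecMul_of_mul_transpose_eq_one hU)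

end Orthonormal

theorem isDiagonalEigenvector_mulVec_iff {K ι σ : Type*} [Field K] [Fintype ι] [DecidableEq ι]
    [Fintype σ] {U : Matrix ι σ K} (hU : U * Uᵀ = 1) {a : ι → K} {d : ℕ}
    {f : MvPolynomial σ K} (hf : f = ∑ i, C (a i) * (∑ t, C (U i t) * X t) ^ d) {w : σ → K}
    (hw : w = (U *ᵥ w) ᵥ* U) :
    IsDiagonalEigenvector a d (U *ᵥ w) ↔
      w ≠ 0 ∧ ∀ s t, eval w (pderiv s f) * w t = eval w (pderiv t f) * w s := by
  set c := U *ᵥ w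
  have hc : c ≠ 0 ↔ w ≠ 0 :=
    not_congr ⟨fun hc => by rw [hw, hc, zero_vecMul], fun hw0 => by simp [c, hw0]⟩
  have hgrad : (fun s => eval w (pderiv s f)) = (fun i => d * a i * c i ^ (d - 1)) ᵥ* U :=
    funext (hf ▸ eval_pderiv_sum_C_mul_pow a U d w)
  rw [IsDiagonalEigenvector, hc]
  refine and_congr_right fun hw0 => ?_
  rw [← exists_eq_smul_iff_forall_mul_eq_mul hw0, hgrad]
  refine exists_congr fun μ => ?_
  rw [hw, ← smul_vecMul, ← vecMulLinear_apply, ← vecMulLinear_apply,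
    (vecMulLinear_injective_of_mul_transpose_eq_one hU).eq_iff, funext_iff]
  simp only [Pi.smul_apply, smul_eq_mul]

theorem Complex.card_nthRootsFinset {n : ℕ} (hn : n ≠ 0) {a : ℂ} (ha : a ≠ 0) :
    #(Polynomial.nthRootsFinset n a) = n := by
  classical
  have hζ := Complex.isPrimitiveRoot_exp n hn
  rw [Polynomial.nthRootsFinset_def, Multiset.toFinset_card_of_nodup (hζ.nthRoots_nodup ha),
    hζ.card_nthRoots, if_pos (IsAlgClosed.exists_pow_nat_eq a (Nat.pos_of_ne_zero hn))]

theorem mul_pow_pred_eq_mul_iff {K : Type*} [Field K] {d : ℕ} (hd : 2 ≤ d) (hd0 : (d : K) ≠ 0)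
    {a b x : K} (ha : a ≠ 0) (hx : x ≠ 0) :
    d * a * x ^ (d - 1) = d * b * x ↔ x ^ (d - 2) = b / a := by
  rw [eq_div_iff ha, show d - 1 = d - 2 + 1 by omega, pow_succ, ← mul_assoc, mul_left_inj' hx,
    mul_assoc, mul_right_inj' hd0, mul_comm]

section RootChoices

variable {K ι : Type*} [Field K] [DecidableEq ι]

/-- The possible coordinates `c i` of the eigenvectors of `∑ aᵢ xᵢ ^ d` (with `m = d - 2`)
supported on `S` and normalised by `c i₀ = 1`. -/
noncomputable def rootChoices (a : ι → K) (m : ℕ) (S : Finset ι) (i₀ i : ι) : Finset K :=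
  if i = i₀ then {1} else if i ∈ S then Polynomial.nthRootsFinset m (a i₀ / a i) else {0}

theorem mem_piFinset_rootChoices_iff [Fintype ι] [CharZero K] {a : ι → K} (ha : ∀ i, a i ≠ 0)
    {d : ℕ} (hd : 3 ≤ d) {S : Finset ι} {i₀ : ι} (hi₀ : i₀ ∈ S) {c : ι → K} :
    c ∈ Fintype.piFinset (rootChoices a (d - 2) S i₀) ↔
      (IsDiagonalEigenvector a d c ∧ ∀ i, c i ≠ 0 ↔ i ∈ S) ∧ c i₀ = 1 := by
  have hm : 0 < d - 2 := by omega
  have hd0 : (d : K) ≠ 0 := by exact_mod_cast (by omega : d ≠ 0)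
  simp only [Fintype.mem_piFinset, rootChoices]
  constructor
  · intro hc
    have hc₀ : c i₀ = 1 := by simpa using hc i₀
    have hroot : ∀ i ∈ S, i ≠ i₀ → c i ∈ Polynomial.nthRootsFinset (d - 2) (a i₀ / a i) :=
      fun i hi hne => by simpa [hne, hi] using hc i
    have hzero : ∀ i ∉ S, c i = 0 := fun i hi => by
      simpa [hi, show i ≠ i₀ by rintro rfl; exact hi hi₀] using hc i
    have hsupp : ∀ i, c i ≠ 0 ↔ i ∈ S := fun i => by
      refine ⟨fun h => by_contra fun hi => h (hzero i hi), fun hi => ?_⟩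
      by_cases hne : i = i₀
      · simp [hne, hc₀]
      · exact Polynomial.ne_zero_of_mem_nthRootsFinset (div_ne_zero (ha i₀) (ha i))
          (hroot i hi hne)
    refine ⟨⟨⟨fun h => by simp [h] at hc₀, d * a i₀, fun i => ?_⟩, hsupp⟩, hc₀⟩
    by_cases hi : i ∈ S
    · by_cases hne : i = i₀
      · simp [hne, hc₀]
      · rw [mul_pow_pred_eq_mul_iff (by omega) hd0 (ha i) ((hsupp i).2 hi),
          ← Polynomial.mem_nthRootsFinset hm]
        exact hroot i hi hne
    · simp [hzero i hi, show d - 1 ≠ 0 by omega]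
  · rintro ⟨⟨⟨-, μ, hμ⟩, hsupp⟩, hc₀⟩ i
    have hμ₀ : μ = d * a i₀ := by simpa [hc₀] using (hμ i₀).symm
    split_ifs with hne hi
    · simp [hne, hc₀]
    · rw [Polynomial.mem_nthRootsFinset hm,
        ← mul_pow_pred_eq_mul_iff (by omega) hd0 (ha i) ((hsupp i).2 hi), hμ i, hμ₀]
    · simpa using (hsupp i).not.2 hi

end RootChoices

theorem prod_card_rootChoices {ι : Type*} [Fintype ι] [DecidableEq ι] {a : ι → ℂ}
    (ha : ∀ i, a i ≠ 0) {m : ℕ} (hm : m ≠ 0) {S : Finset ι} {i₀ : ι} (hi₀ : i₀ ∈ S) :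
    ∏ i, #(rootChoices a m S i₀ i) = m ^ (#S - 1) := by
  have hcard : ∀ i, #(rootChoices a m S i₀ i) = if i ∈ S.erase i₀ then m else 1 := by
    intro i
    unfold rootChoices
    split_ifs <;> simp_all [Complex.card_nthRootsFinset hm (div_ne_zero (ha i₀) (ha i))]
  simp_rw [hcard, prod_ite_mem, univ_inter, prod_const, card_erase_of_mem hi₀]

section Eigenlines

variable {K ι σ : Type*} [Field K] [Fintype ι] [Fintype σ]

/-- With the `vᵢ` as the rows of `U`, `U *ᵥ w` are the coordinates `vᵢ · w`, and
`w = (U *ᵥ w) ᵥ* U` says that `w` lies in the span of the `vᵢ`. -/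
def eigenlinesWithSupport (f : MvPolynomial σ K) (U : Matrix ι σ K) (S : Finset ι) :
    Set (Submodule K (σ → K)) :=
  {L | ∃ w : σ → K, w ≠ 0 ∧
    (∀ i j, eval w (pderiv i f) * w j = eval w (pderiv j f) * w i) ∧
    w = (U *ᵥ w) ᵥ* U ∧ (∀ i, (U *ᵥ w) i ≠ 0 ↔ i ∈ S) ∧ L = K ∙ w}

theorem eigenlinesWithSupport_eq_image [DecidableEq ι] {U : Matrix ι σ K} (hU : U * Uᵀ = 1)
    {a : ι → K} {d : ℕ} {f : MvPolynomial σ K}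
    (hf : f = ∑ i, C (a i) * (∑ t, C (U i t) * X t) ^ d) (S : Finset ι) :
    eigenlinesWithSupport f U S = (fun c => K ∙ U.vecMulLinear c) ''
      {c | IsDiagonalEigenvector a d c ∧ ∀ i, c i ≠ 0 ↔ i ∈ S} := by
  ext L
  constructor
  · rintro ⟨w, hw0, heig, hw, hS, rfl⟩
    exact ⟨U *ᵥ w, ⟨(isDiagonalEigenvector_mulVec_iff hU hf hw).2 ⟨hw0, heig⟩, hS⟩,
      by simp only [vecMulLinear_apply, ← hw]⟩
  · rintro ⟨c, ⟨hc, hS⟩, rfl⟩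
    have hc' : U *ᵥ (c ᵥ* U) = c := mulVec_vecMul_of_mul_transpose_eq_one hU c
    obtain ⟨hw0, heig⟩ := (isDiagonalEigenvector_mulVec_iff hU hf (w := c ᵥ* U) (by rw [hc'])).1
      (by rwa [hc'])
    exact ⟨c ᵥ* U, hw0, heig, by rw [hc'], by rwa [hc'], rfl⟩

theorem eigenlinesWithSupport_empty (f : MvPolynomial σ K) (U : Matrix ι σ K) :
    eigenlinesWithSupport f U ∅ = ∅ := by
  refine Set.eq_empty_of_forall_notMem ?_
  rintro L ⟨w, hw0, -, hw, hS, -⟩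
  refine hw0 (hw.trans ?_)
  rw [show U *ᵥ w = 0 from funext fun i => by simpa using hS i, zero_vecMul]

theorem pairwise_disjoint_eigenlinesWithSupport (f : MvPolynomial σ K) (U : Matrix ι σ K) :
    Pairwise fun S S' => Disjoint (eigenlinesWithSupport f U S) (eigenlinesWithSupport f U S') := by
  intro S S' hne
  refine Set.disjoint_left.2 ?_
  rintro L ⟨w, -, -, -, hS, rfl⟩ ⟨w', -, -, -, hS', hL⟩
  obtain ⟨z, rfl⟩ := Submodule.span_singleton_eq_span_singleton.1 hL
  simp only [Units.smul_def, mulVec_smul, Pi.smul_apply, smul_eq_mul, ne_eq, mul_eq_zero,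
    z.ne_zero, false_or] at hS'
  exact hne (Finset.ext fun i => (hS i).symm.trans (hS' i))

theorem setOf_eigenline_eq_iUnion (f : MvPolynomial σ K) (U : Matrix ι σ K) :
    {L | ∃ w : σ → K, w ≠ 0 ∧ (∀ i j, eval w (pderiv i f) * w j = eval w (pderiv j f) * w i) ∧
      w = (U *ᵥ w) ᵥ* U ∧ L = K ∙ w} = ⋃ S, eigenlinesWithSupport f U S := by
  classical
  ext L
  simp only [Set.mem_ofPred_eq, Set.mem_iUnion, eigenlinesWithSupport]
  constructor
  · rintro ⟨w, hw0, heig, hw, rfl⟩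
    exact ⟨univ.filter fun i => (U *ᵥ w) i ≠ 0, w, hw0, heig, hw, by simp, rfl⟩
  · rintro ⟨S, w, hw0, heig, hw, -, rfl⟩
    exact ⟨w, hw0, heig, hw, rfl⟩

end Eigenlines

theorem ncard_eigenlinesWithSupport {ι σ : Type*} [Fintype ι] [DecidableEq ι] [Fintype σ]
    {U : Matrix ι σ ℂ} (hU : U * Uᵀ = 1) {a : ι → ℂ} (ha : ∀ i, a i ≠ 0) {d : ℕ}
    (hd : 3 ≤ d) {f : MvPolynomial σ ℂ} (hf : f = ∑ i, C (a i) * (∑ t, C (U i t) * X t) ^ d)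
    {S : Finset ι} (hS : S.Nonempty) :
    (eigenlinesWithSupport f U S).ncard = (d - 2) ^ (#S - 1) := by
  obtain ⟨i₀, hi₀⟩ := hS
  set Q := {c | IsDiagonalEigenvector a d c ∧ ∀ i, c i ≠ 0 ↔ i ∈ S}
  have hcone : ∀ c ∈ Q, ∀ t : ℂ, t ≠ 0 → t • c ∈ Q := fun c hc t ht =>
    ⟨hc.1.smul ht, fun i => by simp [ht, hc.2 i]⟩
  have hnormalized : {c ∈ Q | LinearMap.proj (R := ℂ) i₀ c = 1} =
      ↑(Fintype.piFinset (rootChoices a (d - 2) S i₀)) :=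
    Set.ext fun c => (mem_piFinset_rootChoices_iff ha hd hi₀).symm
  rw [eigenlinesWithSupport_eq_image hU hf, ncard_image_span_singleton_eq_ncard_normalized
    (vecMulLinear_injective_of_mul_transpose_eq_one hU) (LinearMap.proj i₀)
    (fun c hc => (hc.2 i₀).2 hi₀) hcone, hnormalized, Set.ncard_coe_finset,
    Fintype.card_piFinset, prod_card_rootChoices ha (by omega) hi₀]

theorem sum_pow_card_pred_eq (ι : Type*) [Fintype ι] {m : ℕ} (hm : m ≠ 0) :
    ∑ S : Finset ι with S.Nonempty, m ^ (#S - 1) = ((m + 1) ^ Fintype.card ι - 1) / m := by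
  classical
  have hpow : ∑ S : Finset ι, m ^ #S = (m + 1) ^ Fintype.card ι := by
    simpa using sum_pow_mul_eq_add_pow m 1 (univ : Finset ι)
  have hmul :
      m * ∑ S : Finset ι with S.Nonempty, m ^ (#S - 1) + 1 = (m + 1) ^ Fintype.card ι := by
    rw [← hpow, ← add_sum_erase univ _ (mem_univ ∅), mul_sum, add_comm]
    congr 1
    refine sum_congr (by ext S; simp [nonempty_iff_ne_empty]) fun S hS => ?_
    have hS : S.Nonempty := nonempty_iff_ne_empty.2 (ne_of_mem_erase hS)
    rw [← pow_succ', Nat.sub_add_cancel hS.card_pos]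
  rw [← hmul, Nat.add_sub_cancel, Nat.mul_div_cancel_left _ (Nat.pos_of_ne_zero hm)]

theorem odeco_eigenvector_count_by_support_general
    (n l d : ℕ) (hd : 3 ≤ d)
    (v : Fin l → Fin n → ℝ)
    (horth : ∀ i j : Fin l, (∑ s : Fin n, v i s * v j s) = if i = j then 1 else 0)
    (lam : Fin l → ℝ) (hlam : ∀ i, lam i ≠ 0)
    (f : MvPolynomial (Fin n) ℂ)
    (hf : f = ∑ i : Fin l, C ((lam i : ℂ)) * (∑ s : Fin n, C ((v i s : ℂ)) * X s) ^ d) :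
    (∀ S : Finset (Fin l), S.Nonempty →
      Set.ncard {L : Submodule ℂ (Fin n → ℂ) | ∃ w : Fin n → ℂ, w ≠ 0 ∧
          (∀ i j : Fin n, eval w (pderiv i f) * w j = eval w (pderiv j f) * w i) ∧
          (w = fun s => ∑ i : Fin l, (∑ t : Fin n, (v i t : ℂ) * w t) * (v i s : ℂ)) ∧
          (∀ i : Fin l, (∑ t : Fin n, (v i t : ℂ) * w t) ≠ 0 ↔ i ∈ S) ∧
          L = Submodule.span ℂ {w}}
        = (d - 2) ^ (S.card - 1)) ∧
    Set.ncard {L : Submodule ℂ (Fin n → ℂ) | ∃ w : Fin n → ℂ, w ≠ 0 ∧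
        (∀ i j : Fin n, eval w (pderiv i f) * w j = eval w (pderiv j f) * w i) ∧
        (w = fun s => ∑ i : Fin l, (∑ t : Fin n, (v i t : ℂ) * w t) * (v i s : ℂ)) ∧
        L = Submodule.span ℂ {w}}
      = ((d - 1) ^ l - 1) / (d - 2) := by
  set U : Matrix (Fin l) (Fin n) ℂ := .of fun i t => (v i t : ℂ)
  have hU : U * Uᵀ = 1 := by
    ext i j
    simpa [U, mul_apply, one_apply, apply_ite] using congrArg ((↑) : ℝ → ℂ) (horth i j)
  have hcount (S : Finset (Fin l)) (hS : S.Nonempty) := ncard_eigenlinesWithSupport hU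
    (fun i => Complex.ofReal_ne_zero.2 (hlam i)) hd hf hS
  have hfinite (S : Finset (Fin l)) : (eigenlinesWithSupport f U S).Finite := by
    rcases S.eq_empty_or_nonempty with rfl | hS
    · simp [eigenlinesWithSupport_empty]
    · exact Set.finite_of_ncard_pos (by rw [hcount S hS]; exact pow_pos (by omega) _)
  have hempty :
      ∑ S : Finset (Fin l) with ¬S.Nonempty, (eigenlinesWithSupport f U S).ncard = 0 :=
    sum_eq_zero fun S hS => by
      rw [not_nonempty_iff_eq_empty.1 (mem_filter.1 hS).2, eigenlinesWithSupport_empty,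
        Set.ncard_empty]
  refine ⟨hcount, (congrArg Set.ncard (setOf_eigenline_eq_iUnion f U)).trans ?_⟩
  rw [Set.ncard_iUnion_of_finite hfinite (pairwise_disjoint_eigenlinesWithSupport f U),
    finsum_eq_sum_of_fintype, ← sum_filter_add_sum_filter_not univ Finset.Nonempty, hempty,
    add_zero, sum_congr rfl fun S hS => hcount S (mem_filter.1 hS).2,
    sum_pow_card_pred_eq _ (by omega), Fintype.card_fin, show d - 2 + 1 = d - 1 by omega]

/-- for `f(x) = ∑_{i=1}^l λᵢ (vᵢ·x)^d` with `v₁,…,v_l ∈ ℝⁿ`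
orthonormal and `λᵢ ≠ 0`, and every nonempty `S ⊆ {1,…,l}`, the set of
eigenvector lines `ℂ·w` with `w = ∑ᵢ (vᵢ·w)vᵢ` and `{i : vᵢ·w ≠ 0} = S` has
exactly `(d-2)^{|S|-1}` elements; consequently the total number of eigenvector
lines in the complex span of `v₁,…,v_l` is `((d-1)^l - 1)/(d-2)`. -/
theorem odeco_eigenvector_count_by_support
    (n l d : ℕ) (hd : 3 ≤ d) (hl : 1 ≤ l) (hln : l ≤ n)
    (v : Fin l → Fin n → ℝ)
    (horth : ∀ i j : Fin l, (∑ s : Fin n, v i s * v j s) = if i = j then 1 else 0)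
    (lam : Fin l → ℝ) (hlam : ∀ i, lam i ≠ 0)
    (f : MvPolynomial (Fin n) ℂ)
    (hf : f = ∑ i : Fin l, C ((lam i : ℂ)) * (∑ s : Fin n, C ((v i s : ℂ)) * X s) ^ d) :
    (∀ S : Finset (Fin l), S.Nonempty →
      Set.ncard {L : Submodule ℂ (Fin n → ℂ) | ∃ w : Fin n → ℂ, w ≠ 0 ∧
          (∀ i j : Fin n, eval w (pderiv i f) * w j = eval w (pderiv j f) * w i) ∧
          (w = fun s => ∑ i : Fin l, (∑ t : Fin n, (v i t : ℂ) * w t) * (v i s : ℂ)) ∧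
          (∀ i : Fin l, (∑ t : Fin n, (v i t : ℂ) * w t) ≠ 0 ↔ i ∈ S) ∧
          L = Submodule.span ℂ {w}}
        = (d - 2) ^ (S.card - 1)) ∧
    Set.ncard {L : Submodule ℂ (Fin n → ℂ) | ∃ w : Fin n → ℂ, w ≠ 0 ∧
        (∀ i j : Fin n, eval w (pderiv i f) * w j = eval w (pderiv j f) * w i) ∧
        (w = fun s => ∑ i : Fin l, (∑ t : Fin n, (v i t : ℂ) * w t) * (v i s : ℂ)) ∧
        L = Submodule.span ℂ {w}}
      = ((d - 1) ^ l - 1) / (d - 2) :=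
  odeco_eigenvector_count_by_support_general n l d hd v horth lam hlam f hf
end

section
/- Let d ≥ 2, let v₁,…,v_k ∈ ℝⁿ be orthonormal vectors, λ₁,…,λ_k ∈ ℝ, and for each multi-index α ∈ ℤ_{≥0}ⁿ define u_α = d!·Σ_{i=1}^k λᵢ vᵢ^α, where vᵢ^α = ∏_{j=1}^n v_{ij}^{α_j}. Then for all y, v, w, z ∈ ℤ_{≥0}ⁿ whose coordinates each sum to d−1 and which satisfy y + v = w + z, one has Σ_{s=1}^n ( u_{y+e_s}·u_{v+e_s} − u_{w+e_s}·u_{z+e_s} ) = 0, where e_s is the s-th standard basis vector of ℤⁿ. -/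
open Finset

/-- the quadratic equations conjectured to cut out the odeco
variety vanish on odeco tensors: if `u_α = d!·∑ᵢ λᵢ vᵢ^α` with `v₁,…,v_k`
orthonormal, then for all multi-indices `y,p,q,r` with coordinate sums `d-1` and
`y + p = q + r`, one has `∑ₛ (u_{y+eₛ}u_{p+eₛ} - u_{q+eₛ}u_{r+eₛ}) = 0`. -/
theorem odeco_equations_vanish
    (n k d : ℕ) (hd : 2 ≤ d)
    (v : Fin k → Fin n → ℝ)
    (horth : ∀ i j : Fin k, (∑ s : Fin n, v i s * v j s) = if i = j then 1 else 0)
    (lam : Fin k → ℝ)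
    (u : (Fin n → ℕ) → ℝ)
    (hu : ∀ α : Fin n → ℕ,
      u α = (Nat.factorial d : ℝ) * ∑ i : Fin k, lam i * ∏ j : Fin n, v i j ^ α j)
    (e : Fin n → Fin n → ℕ)
    (he : ∀ s j : Fin n, e s j = if j = s then 1 else 0)
    (y p q r : Fin n → ℕ)
    (hy : ∑ j, y j = d - 1) (hp : ∑ j, p j = d - 1)
    (hq : ∑ j, q j = d - 1) (hr : ∑ j, r j = d - 1)
    (hsum : y + p = q + r) :
    ∑ s : Fin n, (u (y + e s) * u (p + e s) - u (q + e s) * u (r + e s)) = 0 := by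
  have expand : ∀ (c : Fin n → ℕ) (i : Fin k) (s : Fin n),
      (∏ j : Fin n, v i j ^ ((c + e s) j)) = (∏ j, v i j ^ c j) * v i s := by
    intro c i s
    have h1 : ∀ j, (c + e s) j = c j + (if j = s then 1 else 0) := by
      intro j; simp [he]
    simp only [h1, pow_add]
    rw [Finset.prod_mul_distrib]
    congr 1
    have : ∀ j : Fin n, v i j ^ (if j = s then 1 else 0) = if j = s then v i j else 1 := by
      intro j; split <;> simp
    simp only [this]
    simp
  have key : ∀ (a b : Fin n → ℕ),
      ∑ s : Fin n, u (a + e s) * u (b + e s)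
        = (Nat.factorial d : ℝ)^2 * ∑ i : Fin k,
            lam i * lam i * ((∏ j : Fin n, v i j ^ a j) * ∏ j : Fin n, v i j ^ b j) := by
    intro a b
    have step : ∀ s : Fin n, u (a + e s) * u (b + e s)
        = (Nat.factorial d : ℝ)^2 * ∑ i : Fin k, ∑ i' : Fin k,
            lam i * lam i' * ((∏ j, v i j ^ a j) * ∏ j, v i' j ^ b j) * (v i s * v i' s) := by
      intro s
      rw [hu, hu, Finset.mul_sum, Finset.mul_sum]
      rw [Finset.sum_mul_sum]
      rw [Finset.mul_sum]
      refine Finset.sum_congr rfl fun i _ => ?_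
      rw [Finset.mul_sum]
      refine Finset.sum_congr rfl fun i' _ => ?_
      rw [expand, expand]
      ring
    rw [Finset.sum_congr rfl fun s _ => step s]
    rw [← Finset.mul_sum]
    congr 1
    rw [Finset.sum_comm]
    refine Finset.sum_congr rfl fun i _ => ?_
    rw [Finset.sum_comm]
    have : ∀ i' : Fin k, ∑ s : Fin n,
        lam i * lam i' * ((∏ j, v i j ^ a j) * ∏ j, v i' j ^ b j) * (v i s * v i' s)
        = lam i * lam i' * ((∏ j, v i j ^ a j) * ∏ j, v i' j ^ b j)
            * (if i = i' then 1 else 0) := by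
      intro i'
      rw [← Finset.mul_sum, horth]
    rw [Finset.sum_congr rfl fun i' _ => this i']
    simp
  have hyp : ∀ j, y j + p j = q j + r j := fun j => congrFun hsum j
  have prodeq : ∀ i : Fin k,
      (∏ j : Fin n, v i j ^ y j) * (∏ j : Fin n, v i j ^ p j)
      = (∏ j : Fin n, v i j ^ q j) * (∏ j : Fin n, v i j ^ r j) := by
    intro i
    rw [← Finset.prod_mul_distrib, ← Finset.prod_mul_distrib]
    refine Finset.prod_congr rfl fun j _ => ?_
    rw [← pow_add, ← pow_add, hyp j]
  rw [Finset.sum_sub_distrib, key, key]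
  simp only [prodeq]
  ring
end

section
/- Let d ≥ 2, let v₁,…,v_k ∈ ℝⁿ be orthonormal vectors, λ₁,…,λ_k ∈ ℝ, and let T : {1,…,n}^d → ℝ be the odeco tensor T(j₁,…,j_d) = Σ_{i=1}^k λᵢ v_{i j₁}⋯v_{i j_d}. Define the contraction S : {1,…,n}^{2(d−1)} → ℝ by S(a₁,…,a_{d−1},b₁,…,b_{d−1}) = Σ_{s=1}^n T(a₁,…,a_{d−1},s)·T(b₁,…,b_{d−1},s). Then S is a fully symmetric tensor: S is invariant under every permutation of its 2(d−1) indices. -/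
open Finset

/-- the contraction `S` of an odeco tensor `T` with itself along
one dimension, `S(a,b) = ∑ₛ T(a₁,…,a_{d-1},s)·T(b₁,…,b_{d-1},s)`, is a fully
symmetric tensor of order `2(d-1)`. -/
theorem odeco_contraction_symmetric
    (n k d : ℕ) (hd : 2 ≤ d)
    (v : Fin k → Fin n → ℝ)
    (horth : ∀ i j : Fin k, (∑ s : Fin n, v i s * v j s) = if i = j then 1 else 0)
    (lam : Fin k → ℝ)
    (T : (Fin d → Fin n) → ℝ)
    (hT : ∀ idx : Fin d → Fin n, T idx = ∑ i : Fin k, lam i * ∏ t : Fin d, v i (idx t))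
    (S : (Fin (2 * (d - 1)) → Fin n) → ℝ)
    (hS : ∀ c : Fin (2 * (d - 1)) → Fin n,
      S c = ∑ s : Fin n,
        T (fun t : Fin d => if h : (t : ℕ) < d - 1 then c ⟨(t : ℕ), by omega⟩ else s) *
        T (fun t : Fin d => if h : (t : ℕ) < d - 1 then c ⟨(d - 1) + (t : ℕ), by omega⟩ else s)) :
    ∀ (c : Fin (2 * (d - 1)) → Fin n) (σ : Equiv.Perm (Fin (2 * (d - 1)))),
      S (c ∘ σ) = S c := by
  obtain ⟨m, rfl⟩ : ∃ m, d = m + 1 := ⟨d - 1, by omega⟩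
  have key : ∀ c : Fin (2 * (m + 1 - 1)) → Fin n,
      S c = ∑ i : Fin k, lam i * lam i * ∏ t : Fin (2 * (m + 1 - 1)), v i (c t) := by
    intro c
    rw [hS]
    simp only [hT, Fin.prod_univ_castSucc, Fin.coe_castSucc, Fin.val_last,
      Nat.add_sub_cancel, Fin.is_lt, dite_true, lt_self_iff_false, dite_false]
    have hp : ∀ i : Fin k, (∏ t : Fin (2 * (m + 1 - 1)), v i (c t)) =
        (∏ t : Fin m, v i (c ⟨(t : ℕ), by omega⟩)) *
        ∏ t : Fin m, v i (c ⟨m + (t : ℕ), by omega⟩) := by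
      intro i
      rw [← Fin.prod_congr' (fun t => v i (c t)) (show m + m = 2 * (m + 1 - 1) by omega),
        Fin.prod_univ_add]
      rfl
    simp only [Finset.sum_mul_sum]
    rw [Finset.sum_comm]
    refine Finset.sum_congr rfl fun i _ => ?_
    rw [Finset.sum_comm]
    have : ∀ j : Fin k,
        (∑ s : Fin n, (lam i * ((∏ x : Fin m, v i (c ⟨(x:ℕ), by omega⟩)) * v i s)) *
          (lam j * ((∏ x : Fin m, v j (c ⟨m + (x:ℕ), by omega⟩)) * v j s)))
        = (lam i * (∏ x : Fin m, v i (c ⟨(x:ℕ), by omega⟩)) *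
            (lam j * ∏ x : Fin m, v j (c ⟨m + (x:ℕ), by omega⟩))) *
          ∑ s : Fin n, v i s * v j s := by
      intro j
      rw [Finset.mul_sum]
      exact Finset.sum_congr rfl fun s _ => by ring
    simp only [this, horth, mul_ite, mul_one, mul_zero, Finset.sum_ite_eq,
      Finset.mem_univ, if_true, hp i]
    ring
  intro c σ
  rw [key, key]
  refine Finset.sum_congr rfl fun i _ => ?_
  congr 1
  exact Equiv.prod_comp σ (fun t => v i (c t))
end

section
/- Let d ≥ 2 and consider the polynomial ring ℂ[u₀, u₁, …, u_d]. Let I be the ideal generated by the quadrics f_{a,b} = u_{a+1}u_{b+1} − u_{a+2}u_b + u_a u_b − u_{a+1}u_{b−1} for all integers 0 ≤ a ≤ d−2 and 1 ≤ b ≤ d−1. Then I is a prime ideal. -/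
/-!
The ideal is the kernel of the ring map `Odeco.param : u_i ↦ x t^i + (y - x) t^d (-t)^(d-i)`
into `R[x, y, t]` (with `x, y, t = X 0, X 1, X 2`), hence prime. For `a + 2 ≤ b < d` the
lex-leading monomial of `f_{a,b}` is `u_a u_b`, so division by these generators reduces every
polynomial modulo `I` to a combination of standard monomials: those whose variables other than
`u_d` have two consecutive indices `m, m + 1`. The lex-leading monomial of `param u_i` is
`x t^(2d-i)` for `i < d` and `y t^d` for `i = d`. For a standard monomial, the exponents of the
product of these determine the multiplicity of `u_d`, the number `N` of remaining factors and the
sum of their indices, hence (division with remainder by `N`) the multiplicities at `m` and `m + 1`.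
So the images of the standard monomials have pairwise distinct leading monomials, are linearly
independent, and `param` kills no nonzero standard remainder.
-/

open MvPolynomial

namespace Finsupp

variable {ι : Type*} {p : ι → ℕ} {c c' : ι →₀ ℕ}

def IsBalanced (p : ι → ℕ) (c : ι →₀ ℕ) : Prop :=
  ∀ i ∈ c.support, ∀ j ∈ c.support, p j ≤ p i + 1

theorem IsBalanced.eq_add_one_of_ne (hp : Function.Injective p) (hc : IsBalanced p c)
    {i₀ : ι} (hi₀ : i₀ ∈ c.support) (hmin : ∀ j ∈ c.support, p i₀ ≤ p j) {j : ι}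
    (hj : j ∈ c.support) (hji : j ≠ i₀) : p j = p i₀ + 1 := by
  have := hc i₀ hi₀ j hj
  have := hmin j hj
  have := hp.ne hji
  omega

theorem IsBalanced.weight_eq [DecidableEq ι] (hp : Function.Injective p) (hc : IsBalanced p c)
    {i₀ : ι} (hi₀ : i₀ ∈ c.support) (hmin : ∀ j ∈ c.support, p i₀ ≤ p j) :
    weight p c = degree c * p i₀ + (degree c - c i₀) := by
  have hdeg : degree c = c i₀ + ∑ k ∈ c.support.erase i₀, c k :=
    (Finset.add_sum_erase _ _ hi₀).symm
  have hweight :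
      weight p c = c i₀ * p i₀ + (∑ k ∈ c.support.erase i₀, c k) * (p i₀ + 1) := by
    rw [weight_apply, Finsupp.sum, ← Finset.add_sum_erase _ _ hi₀, Finset.sum_mul]
    refine congrArg₂ _ rfl (Finset.sum_congr rfl fun k hk => ?_)
    rw [hc.eq_add_one_of_ne hp hi₀ hmin (Finset.mem_of_mem_erase hk)
      (Finset.ne_of_mem_erase hk), smul_eq_mul]
  rw [hweight, hdeg, Nat.add_sub_cancel_left]
  ring

theorem IsBalanced.apply_eq [DecidableEq ι] (hp : Function.Injective p) (hc : IsBalanced p c)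
    {i₀ : ι} (hi₀ : i₀ ∈ c.support) (hmin : ∀ j ∈ c.support, p i₀ ≤ p j) (j : ι) :
    c j = if j = i₀ then c i₀ else if p j = p i₀ + 1 then degree c - c i₀ else 0 := by
  split_ifs with hji hj
  · rw [hji]
  · have hsum : degree c = c i₀ + c j := by
      refine Finset.sum_eq_add _ _ (Ne.symm hji) (fun k hk hne => ?_) (by simp) (by simp)
      by_contra hck
      exact hne.2 (hp (by rw [hj, hc.eq_add_one_of_ne hp hi₀ hmin hk hne.1]))
    omega
  · by_contra hcj
    exact hj (hc.eq_add_one_of_ne hp hi₀ hmin (mem_support_iff.mpr hcj) hji)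

theorem IsBalanced.eq_of_degree_eq_of_weight_eq (hp : Function.Injective p)
    (hc : IsBalanced p c) (hc' : IsBalanced p c') (hdeg : degree c = degree c')
    (hweight : weight p c = weight p c') : c = c' := by
  classical
  rcases eq_or_ne c 0 with rfl | hc0
  · exact ((degree_eq_zero_iff c').mp (by rw [← hdeg, map_zero])).symm
  have hc'0 : c' ≠ 0 := fun h => hc0 ((degree_eq_zero_iff c).mp (by rw [hdeg, h, map_zero]))
  obtain ⟨i₀, hi₀, hmin⟩ := c.support.exists_min_image p (support_nonempty_iff.mpr hc0)
  obtain ⟨i₀', hi₀', hmin'⟩ := c'.support.exists_min_image p (support_nonempty_iff.mpr hc'0)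
  have hrem : ∀ {c : ι →₀ ℕ} {i : ι}, i ∈ c.support → degree c - c i < degree c :=
    fun {c i} hi => by have := mem_support_iff.mp hi; have := le_degree i c; omega
  have hpos : 0 < degree c := by have := hrem hi₀; omega
  have hw := hc.weight_eq hp hi₀ hmin
  rw [hweight, hc'.weight_eq hp hi₀' hmin', ← hdeg] at hw
  -- dividing the common weight by the common degree recovers `p i₀` and `c i₀`
  obtain ⟨hq, hr⟩ := (Nat.div_mod_unique hpos).mpr ⟨add_comm _ _, hrem hi₀⟩
  obtain ⟨hq', hr'⟩ := (Nat.div_mod_unique hpos).mpr ⟨add_comm _ _, hdeg ▸ hrem hi₀'⟩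
  rw [hw] at hq' hr'
  obtain rfl : i₀' = i₀ := hp (hq'.symm.trans hq)
  have hci : c i₀' = c' i₀' := by
    have := le_degree i₀' c; have := le_degree i₀' c'; omega
  ext j
  rw [hc.apply_eq hp hi₀ hmin, hc'.apply_eq hp hi₀' hmin', hci, hdeg]

end Finsupp

namespace MonomialOrder

variable {σ R : Type*} [CommRing R] (m : MonomialOrder σ)

theorem linearIndepOn_of_injOn_degree {ι : Type*} [NoZeroDivisors R] {P : ι → MvPolynomial σ R}
    {s : Set ι} (hP : ∀ i ∈ s, P i ≠ 0) (hinj : Set.InjOn (fun i => m.degree (P i)) s) :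
    LinearIndepOn R P s := by
  classical
  rw [linearIndepOn_iff']
  intro t g hts hsum
  by_contra! hg
  obtain ⟨i₀, hi₀, hmax⟩ := (t.filter (g · ≠ 0)).exists_max_image
    (fun i => m.toSyn (m.degree (P i))) (by simpa [Finset.filter_nonempty_iff] using hg)
  rw [Finset.mem_filter] at hi₀
  have hcoeff := congrArg (coeff (m.degree (P i₀))) hsum
  rw [coeff_sum, Finset.sum_eq_single i₀ (fun i hi hne => ?_) (fun h => absurd hi₀.1 h),
    coeff_smul, coeff_zero, smul_eq_mul, mul_eq_zero] at hcoeff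
  · exact hcoeff.elim hi₀.2 (m.coeff_degree_ne_zero_iff.mpr (hP i₀ (hts hi₀.1)))
  rcases eq_or_ne (g i) 0 with hgi | hgi
  · rw [coeff_smul, hgi, zero_smul]
  rw [coeff_smul, m.coeff_eq_zero_of_lt, smul_zero]
  refine lt_of_le_of_ne (hmax i (Finset.mem_filter.mpr ⟨hi, hgi⟩)) fun h => hne ?_
  exact hinj (hts hi) (hts hi₀.1) (m.toSyn.injective h)

theorem degree_X_mul_X [Nontrivial R] [NoZeroDivisors R] (i j : σ) :
    m.degree (X i * X j : MvPolynomial σ R) = Finsupp.single i 1 + Finsupp.single j 1 := by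
  rw [m.degree_mul (X_ne_zero i) (X_ne_zero j), degree_X, degree_X]

theorem lex_single_add_single_lt [LinearOrder σ] [WellFoundedGT σ] {i j k l : σ} (hi : k < i)
    (hj : k < j) :
    Finsupp.single i 1 + Finsupp.single j 1 ≺[lex] Finsupp.single k 1 + Finsupp.single l 1 := by
  rw [lex_lt_iff, Finsupp.Lex.lt_iff]
  refine ⟨min k l, fun n hn => ?_, ?_⟩
  · have hk := lt_of_lt_of_le hn (min_le_left k l)
    have hl := lt_of_lt_of_le hn (min_le_right k l)
    simp [hk.ne', hl.ne', (hk.trans hi).ne', (hk.trans hj).ne']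
  · rcases le_total k l with h | h
    · simp [Finsupp.single_apply, min_eq_left h, hi.ne, hj.ne]
    · simp [Finsupp.single_apply, min_eq_right h, (h.trans_lt hi).ne, (h.trans_lt hj).ne]

end MonomialOrder

namespace Odeco

section Quadric

variable {S : Type*} [CommRing S]

def quadric (p : ℕ → S) (a b : ℕ) : S :=
  p (a + 1) * p (b + 1) - p (a + 2) * p b + p a * p b - p (a + 1) * p (b - 1)

theorem quadric_eq_zero {d a b : ℕ} {x z t : S} {p : ℕ → S}
    (hp : ∀ j ≤ d, p j = x * t ^ j + z * (-t) ^ (d - j)) (ha : a + 2 ≤ d) (hb : 1 ≤ b)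
    (hbd : b < d) : quadric p a b = 0 := by
  obtain ⟨b, rfl⟩ : ∃ b', b = b' + 1 := ⟨b - 1, by omega⟩
  obtain ⟨α, hα⟩ : ∃ α, d - (a + 2) = α := ⟨_, rfl⟩
  obtain ⟨β, hβ⟩ : ∃ β, d - (b + 2) = β := ⟨_, rfl⟩
  rw [quadric, hp a (by omega), hp (a + 1) (by omega), hp (a + 2) (by omega),
    hp (b + 1 - 1) (by omega), hp (b + 1) (by omega), hp (b + 1 + 1) (by omega),
    show d - a = α + 2 by omega, show d - (a + 1) = α + 1 by omega, hα,
    show d - (b + 1 - 1) = β + 2 by omega, show d - (b + 1) = β + 1 by omega,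
    show d - (b + 1 + 1) = β by omega, show b + 1 - 1 = b by omega]
  ring

end Quadric

open Finsupp Fin.NatCast
open MonomialOrder (lex)
open scoped MonomialOrder

variable (d : ℕ) (R : Type*) [CommRing R]

noncomputable def gen (a b : ℕ) : MvPolynomial (Fin (d + 1)) R :=
  quadric (fun j => X (j : Fin (d + 1))) a b

def gens : Set (MvPolynomial (Fin (d + 1)) R) :=
  {p | ∃ a b, a + 2 ≤ d ∧ 1 ≤ b ∧ b < d ∧ p = gen d R a b}

/-- `u_i ↦ x t^i + y (-t)^(d-i)` parametrizes the odeco tensors `x (t, 1)^⊗d + y (1, -t)^⊗d`;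
substituting `(y - x) t^d` for `y` sends `u_d` to `y t^d`, which separates it from the other
variables at the level of lex-leading monomials. -/
noncomputable def param : MvPolynomial (Fin (d + 1)) R →ₐ[R] MvPolynomial (Fin 3) R :=
  aeval fun i => X 0 * X 2 ^ (i : ℕ) + (X 1 - X 0) * X 2 ^ d * (-X 2) ^ (d - i)

noncomputable def leadExp (i : Fin (d + 1)) : Fin 3 →₀ ℕ :=
  single (if (i : ℕ) < d then 0 else 1) 1 + single 2 (2 * d - i)

def IsStandard (c : Fin (d + 1) →₀ ℕ) : Prop :=
  ∀ a b : ℕ, a + 2 ≤ b → b < d →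
    ¬ single (a : Fin (d + 1)) 1 + single (b : Fin (d + 1)) 1 ≤ c

variable {d R}

theorem X_mk {j : ℕ} (h : j < d + 1) :
    (X ⟨j, h⟩ : MvPolynomial (Fin (d + 1)) R) = X (j : Fin (d + 1)) :=
  congrArg X (Fin.ext (Nat.mod_eq_of_lt h).symm)

theorem param_gen {a b : ℕ} (ha : a + 2 ≤ d) (hb : 1 ≤ b) (hbd : b < d) :
    param d R (gen d R a b) = 0 := by
  have hmap :
      param d R (gen d R a b) = quadric (fun j => param d R (X (j : Fin (d + 1)))) a b := by
    simp only [gen, quadric, map_sub, map_add, map_mul]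
  rw [hmap]
  refine quadric_eq_zero (x := X 0) (z := (X 1 - X 0) * X 2 ^ d) (t := X 2) (fun j hj => ?_)
    ha hb hbd
  rw [param, aeval_X, Fin.val_natCast, Nat.mod_eq_of_lt (Nat.lt_succ_of_le hj)]

theorem param_monomial (c : Fin (d + 1) →₀ ℕ) :
    param d R (monomial c 1) = ∏ i ∈ c.support, param d R (X i) ^ c i := by
  rw [param, aeval_monomial, map_one, one_mul, Finsupp.prod]
  simp only [aeval_X]

theorem param_X_of_lt {i : Fin (d + 1)} (hi : (i : ℕ) < d) :
    param d R (X i) = monomial (single 0 1 + single 2 (2 * d - i)) (-(-1) ^ (d - i)) +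
      (monomial (single 0 1 + single 2 (i : ℕ)) 1 +
        monomial (single 1 1 + single 2 (2 * d - i)) ((-1) ^ (d - i))) := by
  rw [param, aeval_X]
  simp only [monomial_add_single, ← C_mul_X_pow_eq_monomial, map_neg, map_pow, map_one]
  rw [show 2 * d - i = d + (d - i) by omega, neg_pow (X 2 : MvPolynomial (Fin 3) R)]
  ring

theorem param_X_last : param d R (X (Fin.last d)) = monomial (single 1 1 + single 2 d) 1 := by
  rw [param, aeval_X, monomial_add_single, ← C_mul_X_pow_eq_monomial, map_one, Fin.val_last,
    Nat.sub_self]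
  ring

section Leading

variable [IsDomain R] {a b : ℕ}

theorem lex_degree_gen_sub_lt (hab : a + 2 ≤ b) (hb : b < d) :
    lex.degree (gen d R a b - X (a : Fin (d + 1)) * X (b : Fin (d + 1))) ≺[lex]
      single (a : Fin (d + 1)) 1 + single (b : Fin (d + 1)) 1 := by
  have hlt : ∀ i j : ℕ, a < i → a < j → i ≤ d → j ≤ d →
      lex.degree (X (i : Fin (d + 1)) * X (j : Fin (d + 1)) : MvPolynomial (Fin (d + 1)) R)
        ≺[lex] single (a : Fin (d + 1)) 1 + single (b : Fin (d + 1)) 1 :=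
    fun i j hi hj hid hjd => by
      rw [lex.degree_X_mul_X]
      exact MonomialOrder.lex_single_add_single_lt (Fin.natCast_strictMono hid hi)
        (Fin.natCast_strictMono hjd hj)
  have hrest : gen d R a b - X (a : Fin (d + 1)) * X (b : Fin (d + 1)) =
      X ((a + 1 : ℕ) : Fin (d + 1)) * X ((b + 1 : ℕ) : Fin (d + 1))
        - X ((a + 2 : ℕ) : Fin (d + 1)) * X (b : Fin (d + 1))
        - X ((a + 1 : ℕ) : Fin (d + 1)) * X ((b - 1 : ℕ) : Fin (d + 1)) := by
    simp only [gen, quadric]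
    ring
  rw [hrest]
  refine lt_of_le_of_lt (MonomialOrder.degree_sub_le.trans
    (sup_le_sup_right MonomialOrder.degree_sub_le _)) ?_
  simp only [sup_lt_iff]
  exact ⟨⟨hlt _ _ (by omega) (by omega) (by omega) (by omega),
    hlt _ _ (by omega) (by omega) (by omega) (by omega)⟩,
    hlt _ _ (by omega) (by omega) (by omega) (by omega)⟩

theorem lex_degree_gen (hab : a + 2 ≤ b) (hb : b < d) :
    lex.degree (gen d R a b) = single (a : Fin (d + 1)) 1 + single (b : Fin (d + 1)) 1 := by
  rw [← add_sub_cancel (X (a : Fin (d + 1)) * X (b : Fin (d + 1))) (gen d R a b),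
    MonomialOrder.degree_add_of_lt, lex.degree_X_mul_X]
  rw [lex.degree_X_mul_X]
  exact lex_degree_gen_sub_lt hab hb

theorem lex_monic_gen (hab : a + 2 ≤ b) (hb : b < d) : lex.Monic (gen d R a b) := by
  rw [← add_sub_cancel (X (a : Fin (d + 1)) * X (b : Fin (d + 1))) (gen d R a b)]
  refine (MonomialOrder.monic_X.mul MonomialOrder.monic_X).add_of_lt ?_
  rw [lex.degree_X_mul_X]
  exact lex_degree_gen_sub_lt hab hb

theorem lex_degree_param_X (i : Fin (d + 1)) :
    lex.degree (param d R (X i)) = leadExp d i := by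
  classical
  rw [leadExp]
  split_ifs with hi
  · have hlt : ∀ (e : Fin 3 →₀ ℕ) (c : R), e ≺[lex] single 0 1 + single 2 (2 * d - i) →
        lex.degree (monomial e c) ≺[lex] single 0 1 + single 2 (2 * d - i) :=
      fun e c he => lt_of_le_of_lt (MonomialOrder.degree_monomial_le c) he
    rw [param_X_of_lt hi, MonomialOrder.degree_add_of_lt, MonomialOrder.degree_monomial,
      if_neg (by simp)]
    rw [MonomialOrder.degree_monomial, if_neg (by simp)]
    refine lt_of_le_of_lt MonomialOrder.degree_add_le (max_lt (hlt _ _ ?_) (hlt _ _ ?_))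
    · rw [MonomialOrder.lex_lt_iff, Finsupp.Lex.lt_iff]
      refine ⟨2, fun j hj => ?_, ?_⟩
      · fin_cases j <;> simp_all
      · simp; omega
    · rw [MonomialOrder.lex_lt_iff, Finsupp.Lex.lt_iff]
      exact ⟨0, fun j hj => absurd hj (Fin.not_lt_zero j), by simp⟩
  · obtain rfl : i = Fin.last d := Fin.ext (by have := Fin.is_le i; rw [Fin.val_last]; omega)
    rw [param_X_last, MonomialOrder.degree_monomial, if_neg one_ne_zero, Fin.val_last,
      show 2 * d - d = d by omega]

theorem param_X_ne_zero (i : Fin (d + 1)) : param d R (X i) ≠ 0 := by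
  refine MonomialOrder.ne_zero_of_degree_ne_zero (m := lex) ?_
  rw [lex_degree_param_X, leadExp]
  simp

theorem param_monomial_ne_zero (c : Fin (d + 1) →₀ ℕ) : param d R (monomial c 1) ≠ 0 := by
  rw [param_monomial]
  exact Finset.prod_ne_zero_iff.mpr fun i _ => pow_ne_zero _ (param_X_ne_zero i)

theorem lex_degree_param_monomial (c : Fin (d + 1) →₀ ℕ) :
    lex.degree (param d R (monomial c 1)) = weight (leadExp d) c := by
  rw [param_monomial, MonomialOrder.degree_prod fun i _ => pow_ne_zero _ (param_X_ne_zero i),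
    weight_apply, Finsupp.sum]
  simp only [MonomialOrder.degree_pow, lex_degree_param_X]

end Leading

theorem IsStandard.isBalanced_erase {c : Fin (d + 1) →₀ ℕ} (hc : IsStandard d c) :
    IsBalanced (fun i : Fin (d + 1) => 2 * d - i) (c.erase (Fin.last d)) := by
  intro i hi j hj
  simp only [support_erase, Finset.mem_erase, Finsupp.mem_support_iff, ne_eq] at hi hj
  have hi' : (i : ℕ) < d := lt_of_le_of_ne (Fin.is_le i) (fun h => hi.1 (Fin.ext h))
  have hj' : (j : ℕ) < d := lt_of_le_of_ne (Fin.is_le j) (fun h => hj.1 (Fin.ext h))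
  by_contra hlt
  simp only at hlt
  refine hc j i (by omega) hi' fun k => ?_
  simp only [Fin.cast_val_eq_self, Finsupp.coe_add, Pi.add_apply, single_apply]
  have hij : j ≠ i := fun h => by subst h; omega
  split_ifs <;> subst_vars <;> omega

theorem weight_leadExp_apply (c : Fin (d + 1) →₀ ℕ) :
    weight (leadExp d) c 1 = c (Fin.last d) ∧
      weight (leadExp d) c 0 + weight (leadExp d) c 1 = degree c ∧
      weight (leadExp d) c 2 = weight (fun i : Fin (d + 1) => 2 * d - i) c := by
  simp [weight_eq_sum, degree_eq_sum, Fin.sum_univ_castSucc, leadExp]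

theorem injOn_weight_leadExp : Set.InjOn (weight (leadExp d)) {c | IsStandard d c} := by
  intro c hc c' hc' h
  obtain ⟨h1, h01, h2⟩ := weight_leadExp_apply c
  obtain ⟨h1', h01', h2'⟩ := weight_leadExp_apply c'
  rw [h] at h1 h01 h2
  have hlast : c (Fin.last d) = c' (Fin.last d) := h1.symm.trans h1'
  have hsplit : ∀ (φ : (Fin (d + 1) →₀ ℕ) →+ ℕ) (c : Fin (d + 1) →₀ ℕ),
      φ c = φ (single (Fin.last d) (c (Fin.last d))) + φ (c.erase (Fin.last d)) :=
    fun φ c => by rw [← map_add, single_add_erase]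
  have herase : c.erase (Fin.last d) = c'.erase (Fin.last d) := by
    refine hc.isBalanced_erase.eq_of_degree_eq_of_weight_eq (fun i j hij => ?_)
      hc'.isBalanced_erase ?_ ?_
    · have := Fin.is_le i
      have := Fin.is_le j
      exact Fin.ext (by omega)
    · have e := hsplit degree c
      have e' := hsplit degree c'
      rw [degree_single] at e e'
      omega
    · have e := hsplit (weight fun i : Fin (d + 1) => 2 * d - i) c
      have e' := hsplit (weight fun i : Fin (d + 1) => 2 * d - i) c'
      rw [weight_single, hlast] at e
      rw [weight_single] at e'
      omega
  rw [← single_add_erase (Fin.last d) c, ← single_add_erase (Fin.last d) c', hlast, herase]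

variable [IsDomain R]

theorem linearIndepOn_param_monomial :
    LinearIndepOn R (fun c => param d R (monomial c 1)) {c | IsStandard d c} := by
  refine lex.linearIndepOn_of_injOn_degree (fun c _ => param_monomial_ne_zero c) ?_
  simpa only [lex_degree_param_monomial] using injOn_weight_leadExp

theorem eq_zero_of_param_eq_zero {r : MvPolynomial (Fin (d + 1)) R}
    (hr : r ∈ restrictSupport R {c | IsStandard d c}) (h : param d R r = 0) : r = 0 := by
  have hsum : ∑ c ∈ r.support, coeff c r • param d R (monomial c 1) = 0 := by
    conv_rhs => rw [← h, as_sum r, map_sum]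
    refine Finset.sum_congr rfl fun c _ => ?_
    rw [← map_smul, smul_monomial, smul_eq_mul, mul_one]
  ext c
  by_cases hc : c ∈ r.support
  · exact linearIndepOn_iff'.mp linearIndepOn_param_monomial r.support _ hr hsum c hc
  · simpa using hc

theorem exists_sub_mem_span_gens (f : MvPolynomial (Fin (d + 1)) R) :
    ∃ r ∈ restrictSupport R {c | IsStandard d c}, f - r ∈ Ideal.span (gens d R) := by
  obtain ⟨g, r, hf, -, hr⟩ := lex.div
    (b := fun ab : {ab : ℕ × ℕ // ab.1 + 2 ≤ ab.2 ∧ ab.2 < d} => gen d R ab.1.1 ab.1.2)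
    (fun ab => by rw [lex_monic_gen ab.2.1 ab.2.2]; exact isUnit_one) f
  refine ⟨r, (mem_restrictSupport_iff R).mpr fun c hc a b hab hb => ?_, ?_⟩
  · simpa only [lex_degree_gen hab hb] using hr c hc ⟨(a, b), hab, hb⟩
  · rw [hf, add_sub_cancel_right, linearCombination_apply]
    exact Ideal.sum_mem _ fun ab _ => Ideal.mul_mem_left _ _
      (Ideal.subset_span ⟨ab.1.1, ab.1.2, by omega, by omega, ab.2.2, rfl⟩)

theorem ker_param : RingHom.ker (param d R) = Ideal.span (gens d R) := by
  have hle : Ideal.span (gens d R) ≤ RingHom.ker (param d R) := by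
    rw [Ideal.span_le]
    rintro _ ⟨a, b, ha, hb, hbd, rfl⟩
    exact param_gen ha hb hbd
  refine le_antisymm (fun f hf => ?_) hle
  obtain ⟨r, hr, hfr⟩ := exists_sub_mem_span_gens f
  have hr0 : param d R r = 0 := by
    have := hle hfr
    rw [RingHom.mem_ker] at hf this
    rwa [map_sub, hf, zero_sub, neg_eq_zero] at this
  rwa [eq_zero_of_param_eq_zero hr hr0, sub_zero] at hfr

theorem isPrime_span_gens : (Ideal.span (gens d R)).IsPrime := by
  rw [← ker_param]
  exact RingHom.ker_isPrime _

end Odeco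

/-- for `n = 2`, the ideal generated by the conjectured odeco
equations `f_{a,b} = u_{a+1}u_{b+1} - u_{a+2}u_b + u_a u_b - u_{a+1}u_{b-1}`
(for `0 ≤ a ≤ d-2`, `1 ≤ b ≤ d-1`) in `ℂ[u₀,…,u_d]` is prime. -/
theorem odeco_ideal_n2_prime
    (d : ℕ) (hd : 2 ≤ d)
    (I : Ideal (MvPolynomial (Fin (d + 1)) ℂ))
    (hI : I = Ideal.span {p | ∃ a b : ℕ,
        ∃ (_ : a ≤ d - 2) (_ : 1 ≤ b) (_ : b ≤ d - 1),
        p = X (⟨a + 1, by omega⟩ : Fin (d + 1)) * X ⟨b + 1, by omega⟩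
            - X ⟨a + 2, by omega⟩ * X ⟨b, by omega⟩
            + X ⟨a, by omega⟩ * X ⟨b, by omega⟩
            - X ⟨a + 1, by omega⟩ * X ⟨b - 1, by omega⟩}) :
    I.IsPrime := by
  subst hI
  convert Odeco.isPrime_span_gens (d := d) (R := ℂ) using 2
  ext p
  constructor
  · rintro ⟨a, b, ha, hb, hbd, rfl⟩
    exact ⟨a, b, by omega, hb, by omega, by simp only [Odeco.X_mk]; rfl⟩
  · rintro ⟨a, b, ha, hb, hbd, rfl⟩
    exact ⟨a, b, by omega, hb, by omega, by simp only [Odeco.X_mk]; rfl⟩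
end
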